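/- arXiv:1808.05687 — 10 statements merged into one kernel-verified Lean document; each statement's English description precedes it below -/
import Mathlib

section
/- The variational-discrete optimal control problem admits a unique solution: there exists exactly one pair (u,y) ∈ U_ad × Y with a(y,v) = b(u,v) + f(v) for all v ∈ Y that minimizes J(u,y) = ½‖E y − z‖²_H + (α/2)‖u‖²_U over all such admissible pairs. Equivalently, the reduced cost u ↦ J(u, S(u)), where S(u) ∈ Y is the unique solution of a(S(u),v) = b(u,v) + f(v) for all v ∈ Y, has a unique minimizer on U_ad. -/
/-!
By Lax–Milgram the state equation `a(y, ·) = b(u, ·) + f` has the unique solution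
`y = T u + y₀` with `T : U →L[ℝ] Y`, so the problem is to minimize the Tikhonov functional
`½‖A u - w‖² + (α/2)‖u‖²` over `U_ad`, where `A = E ∘ T` and `w = z - E y₀`. That functional is
`½‖p - Φ u‖²` for `Φ u = (A u, √α u)` in `H × U` with the `L²` norm and `p = (w, 0)`. As `Φ` is
linear and bounded below, `Φ U_ad` is complete and convex and `Φ` is injective, so the unique
nearest point of `Φ U_ad` to `p` pulls back to the unique minimizer.
-/

open RealInnerProductSpace

section NearestPoint

variable {F : Type*} [NormedAddCommGroup F] [InnerProductSpace ℝ F]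

theorem existsUnique_isMinOn_norm_sub {K : Set F} (hne : K.Nonempty) (hK : IsComplete K)
    (hcx : Convex ℝ K) (p : F) : ∃! v, v ∈ K ∧ IsMinOn (fun w => ‖p - w‖) K v := by
  have hchar : ∀ v ∈ K, IsMinOn (fun w => ‖p - w‖) K v → ∀ w ∈ K, ⟪p - v, w - v⟫ ≤ 0 :=
    fun v hv hmin => (norm_eq_iInf_iff_real_inner_le_zero hcx hv).1 (hmin.iInf_eq hv).symm
  obtain ⟨v, hv, hinf⟩ := exists_norm_eq_iInf_of_complete_convex hne hK hcx p
  have hvmin : IsMinOn (fun w => ‖p - w‖) K v := fun w hw => by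
    change ‖p - v‖ ≤ ‖p - w‖
    exact hinf ▸ ciInf_le ⟨0, by rintro _ ⟨w, rfl⟩; exact norm_nonneg _⟩ (⟨w, hw⟩ : K)
  refine ⟨v, ⟨hv, hvmin⟩, fun v' ⟨hv', hmin'⟩ => ?_⟩
  -- the two variational inequalities add up to `‖v' - v‖² ≤ 0`
  have hsq : ‖v' - v‖ ^ 2 ≤ 0 := by
    rw [← real_inner_self_eq_norm_sq]
    calc ⟪v' - v, v' - v⟫ = ⟪p - v, v' - v⟫ + ⟪p - v', v - v'⟫ := by
          rw [← neg_sub v' v, inner_neg_right, ← sub_eq_add_neg, ← inner_sub_left,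
            sub_sub_sub_cancel_left]
      _ ≤ 0 := add_nonpos (hchar v hv hvmin v' hv') (hchar v' hv' hmin' v hv)
  simpa [sub_eq_zero] using le_antisymm hsq (sq_nonneg _)

theorem existsUnique_isMinOn_comp {α β : Type*} {g : β → ℝ} {Φ : α → β}
    (hΦ : Function.Injective Φ) {K : Set α} (h : ∃! v, v ∈ Φ '' K ∧ IsMinOn g (Φ '' K) v) :
    ∃! u, u ∈ K ∧ IsMinOn (g ∘ Φ) K u := by
  have hmin : ∀ u, IsMinOn (g ∘ Φ) K u ↔ IsMinOn g (Φ '' K) (Φ u) := by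
    simp [isMinOn_iff]
  obtain ⟨_, ⟨⟨u, hu, rfl⟩, hvmin⟩, huniq⟩ := h
  exact ⟨u, ⟨hu, (hmin u).2 hvmin⟩, fun u' ⟨hu', hu'min⟩ =>
    hΦ (huniq _ ⟨⟨u', hu', rfl⟩, (hmin u').1 hu'min⟩)⟩

end NearestPoint

section Tikhonov

variable {U H : Type*} [NormedAddCommGroup U] [InnerProductSpace ℝ U]
  [NormedAddCommGroup H] [InnerProductSpace ℝ H]

noncomputable def tikhonovEmbedding (A : U →L[ℝ] H) (ε : ℝ) : U →L[ℝ] WithLp 2 (H × U) :=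
  (WithLp.prodContinuousLinearEquiv 2 ℝ H U).symm.toContinuousLinearMap.comp
    (A.prod (ε • ContinuousLinearMap.id ℝ U))

theorem norm_sub_tikhonovEmbedding_sq (A : U →L[ℝ] H) (ε : ℝ) (w : H) (u : U) :
    ‖WithLp.toLp 2 (w, 0) - tikhonovEmbedding A ε u‖ ^ 2 = ‖A u - w‖ ^ 2 + ε ^ 2 * ‖u‖ ^ 2 := by
  rw [WithLp.prod_norm_sq_eq_of_L2]
  change ‖w - A u‖ ^ 2 + ‖0 - ε • u‖ ^ 2 = _
  rw [norm_sub_rev, zero_sub, norm_neg, norm_smul, mul_pow, Real.norm_eq_abs, sq_abs]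

theorem antilipschitzWith_tikhonovEmbedding (A : U →L[ℝ] H) {ε : ℝ} (hε : 0 < ε) :
    AntilipschitzWith ⟨ε⁻¹, by positivity⟩ (tikhonovEmbedding A ε) :=
  (tikhonovEmbedding A ε).antilipschitz_of_bound fun u => by
    change ‖u‖ ≤ ε⁻¹ * _
    rw [← div_eq_inv_mul, le_div_iff₀' hε]
    calc ε * ‖u‖ = ‖(tikhonovEmbedding A ε u).snd‖ := by
          change _ = ‖ε • u‖
          rw [norm_smul, Real.norm_of_nonneg hε.le]
      _ ≤ ‖tikhonovEmbedding A ε u‖ := WithLp.norm_snd_le _ _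

theorem existsUnique_isMinOn_tikhonov [CompleteSpace U] (A : U →L[ℝ] H) (w : H) {α : ℝ}
    (hα : 0 < α) {K : Set U} (hne : K.Nonempty) (hcl : IsClosed K) (hcx : Convex ℝ K) :
    ∃! u, u ∈ K ∧ IsMinOn (fun u => 1 / 2 * ‖A u - w‖ ^ 2 + α / 2 * ‖u‖ ^ 2) K u := by
  set Φ := tikhonovEmbedding A √α
  have hanti := antilipschitzWith_tikhonovEmbedding A (Real.sqrt_pos.2 hα)
  have hΦK : IsComplete (Φ '' K) :=
    (isComplete_image_iff (hanti.isUniformInducing Φ.uniformContinuous)).2 hcl.isComplete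
  have hmin := existsUnique_isMinOn_comp hanti.injective <|
    existsUnique_isMinOn_norm_sub (hne.image Φ) hΦK (hcx.linear_image Φ.toLinearMap)
      (WithLp.toLp 2 (w, 0))
  have hj : (fun u => 1 / 2 * ‖A u - w‖ ^ 2 + α / 2 * ‖u‖ ^ 2) =
      fun u => ‖WithLp.toLp 2 (w, 0) - Φ u‖ ^ 2 / 2 := by
    funext u
    rw [norm_sub_tikhonovEmbedding_sq, Real.sq_sqrt hα.le]
    ring
  simpa only [hj, isMinOn_iff, Function.comp_def,
    div_le_div_iff_of_pos_right (two_pos : (0 : ℝ) < 2),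
    pow_le_pow_iff_left₀ (norm_nonneg _) (norm_nonneg _) two_ne_zero] using hmin

end Tikhonov

namespace IsCoercive

variable {V : Type*} [NormedAddCommGroup V] [InnerProductSpace ℝ V] [CompleteSpace V]
  {B : V →L[ℝ] V →L[ℝ] ℝ}

noncomputable def toDualEquiv (hB : IsCoercive B) : V ≃L[ℝ] StrongDual ℝ V :=
  hB.continuousLinearEquivOfBilin.trans (InnerProductSpace.toDual ℝ V).toContinuousLinearEquiv

@[simp]
theorem toDualEquiv_apply (hB : IsCoercive B) (v : V) : hB.toDualEquiv v = B v := by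
  ext w
  simp [toDualEquiv]

theorem forall_apply_eq_iff_eq_toDualEquiv_symm (hB : IsCoercive B) (y : V)
    (ℓ : StrongDual ℝ V) : (∀ v, B y v = ℓ v) ↔ y = hB.toDualEquiv.symm ℓ := by
  rw [hB.toDualEquiv.eq_symm_apply, toDualEquiv_apply, ContinuousLinearMap.ext_iff]

end IsCoercive

theorem LinearMap.isCoercive_mkContinuous₂ {V : Type*} [NormedAddCommGroup V]
    [InnerProductSpace ℝ V] (a : V →ₗ[ℝ] V →ₗ[ℝ] ℝ) {γ β : ℝ} (hβ : 0 < β)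
    (ha : ∀ y v, ‖a y v‖ ≤ γ * ‖y‖ * ‖v‖) (ha_coer : ∀ y, β * ‖y‖ ^ 2 ≤ a y y) :
    IsCoercive (a.mkContinuous₂ γ ha) :=
  ⟨β, hβ, fun y => by simpa [mul_assoc, ← sq] using ha_coer y⟩

theorem stmt_0_general
    {Y U H : Type*}
    [NormedAddCommGroup Y] [InnerProductSpace ℝ Y] [CompleteSpace Y]
    [NormedAddCommGroup U] [InnerProductSpace ℝ U] [CompleteSpace U]
    [NormedAddCommGroup H] [InnerProductSpace ℝ H]
    (E : Y →L[ℝ] H)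
    (a : Y →ₗ[ℝ] Y →ₗ[ℝ] ℝ) (γ β : ℝ) (hβ : 0 < β)
    (ha_cont : ∀ y v : Y, |a y v| ≤ γ * ‖y‖ * ‖v‖)
    (ha_coer : ∀ y : Y, β * ‖y‖ ^ 2 ≤ a y y)
    (b : U →ₗ[ℝ] Y →ₗ[ℝ] ℝ) (κ : ℝ)
    (hb_cont : ∀ (w : U) (v : Y), |b w v| ≤ κ * ‖w‖ * ‖v‖)
    (f : Y →L[ℝ] ℝ) (z : H) (α : ℝ) (hα : 0 < α)
    (Uad : Set U) (hUne : Uad.Nonempty) (hUcl : IsClosed Uad) (hUcx : Convex ℝ Uad)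
    :
    ∃! uy : U × Y, uy.1 ∈ Uad ∧ (∀ v : Y, a uy.2 v = b uy.1 v + f v) ∧
      ∀ (u' : U) (y' : Y), u' ∈ Uad → (∀ v : Y, a y' v = b u' v + f v) →
        (1 / 2) * ‖E uy.2 - z‖ ^ 2 + (α / 2) * ‖uy.1‖ ^ 2 ≤
          (1 / 2) * ‖E y' - z‖ ^ 2 + (α / 2) * ‖u'‖ ^ 2 := by
  have hA := a.isCoercive_mkContinuous₂ hβ ha_cont ha_coer
  set L := hA.toDualEquiv
  set B := b.mkContinuous₂ κ hb_cont
  set T : U →L[ℝ] Y := (L.symm : StrongDual ℝ Y →L[ℝ] Y).comp B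
  set y₀ := L.symm f
  have hstate : ∀ u y, (∀ v, a y v = b u v + f v) ↔ y = T u + y₀ := fun u y => by
    change _ ↔ y = L.symm (B u) + L.symm f
    rw [← map_add]
    exact hA.forall_apply_eq_iff_eq_toDualEquiv_symm y (B u + f)
  have hcost : ∀ u, E (T u + y₀) - z = (E ∘L T) u - (z - E y₀) := fun u => by
    simp only [map_add, ContinuousLinearMap.comp_apply]
    abel
  obtain ⟨u, ⟨hu, hmin⟩, huniq⟩ :=
    existsUnique_isMinOn_tikhonov (E ∘L T) (z - E y₀) hα hUne hUcl hUcx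
  refine ⟨(u, T u + y₀), ⟨hu, (hstate _ _).2 rfl, fun u' y' hu' hy' => ?_⟩, ?_⟩
  · rw [(hstate u' y').1 hy', hcost, hcost]
    exact hmin hu'
  · rintro ⟨u', y'⟩ ⟨hu', hy', hmin'⟩
    obtain rfl := (hstate u' y').1 hy'
    obtain rfl : u' = u := huniq u' ⟨hu', isMinOn_iff.2 fun u'' hu'' => by
      simpa only [hcost] using hmin' u'' _ hu'' ((hstate _ _).2 rfl)⟩
    rfl

theorem stmt_0
    {Y U H : Type*}
    [NormedAddCommGroup Y] [InnerProductSpace ℝ Y] [CompleteSpace Y]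
    [NormedAddCommGroup U] [InnerProductSpace ℝ U] [CompleteSpace U]
    [NormedAddCommGroup H] [InnerProductSpace ℝ H] [CompleteSpace H]
    (E : Y →L[ℝ] H) (ρ₁ : ℝ) (hρ₁ : 0 < ρ₁)
    (hE : ∀ y : Y, ‖E y‖ ≤ (1 / ρ₁) * ‖y‖)
    (a : Y →ₗ[ℝ] Y →ₗ[ℝ] ℝ) (γ β : ℝ) (hγ : 0 < γ) (hβ : 0 < β)
    (ha_cont : ∀ y v : Y, |a y v| ≤ γ * ‖y‖ * ‖v‖)
    (ha_coer : ∀ y : Y, β * ‖y‖ ^ 2 ≤ a y y)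
    (b : U →ₗ[ℝ] Y →ₗ[ℝ] ℝ) (κ : ℝ) (hκ : 0 < κ)
    (hb_cont : ∀ (w : U) (v : Y), |b w v| ≤ κ * ‖w‖ * ‖v‖)
    (f : Y →L[ℝ] ℝ) (z : H) (α : ℝ) (hα : 0 < α)
    (Uad : Set U) (hUne : Uad.Nonempty) (hUcl : IsClosed Uad) (hUcx : Convex ℝ Uad)
    :
    ∃! uy : U × Y, uy.1 ∈ Uad ∧ (∀ v : Y, a uy.2 v = b uy.1 v + f v) ∧
      ∀ (u' : U) (y' : Y), u' ∈ Uad → (∀ v : Y, a y' v = b u' v + f v) →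
        (1 / 2) * ‖E uy.2 - z‖ ^ 2 + (α / 2) * ‖uy.1‖ ^ 2 ≤
          (1 / 2) * ‖E y' - z‖ ^ 2 + (α / 2) * ‖u'‖ ^ 2 :=
  stmt_0_general E a γ β hβ ha_cont ha_coer b κ hb_cont f z α hα Uad hUne hUcl hUcx
end

section
/- First-order optimality conditions: if u ∈ U_ad minimizes J(u, S(u)) over U_ad, where S(u) ∈ Y is the unique solution of a(S(u),v) = b(u,v) + f(v) for all v ∈ Y, then there exist a state y ∈ Y and an adjoint state p ∈ Y such that: a(y,v) = b(u,v) + f(v) for all v ∈ Y; a(v,p) = (E y − z, E v)_H for all v ∈ Y; and b(v − u, p) + α(u, v − u)_U ≥ 0 for all v ∈ U_ad. -/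
open RealInnerProductSpace

set_option maxHeartbeats 1000000

theorem stmt_1
    {Y U H : Type*}
    [NormedAddCommGroup Y] [InnerProductSpace ℝ Y] [CompleteSpace Y]
    [NormedAddCommGroup U] [InnerProductSpace ℝ U] [CompleteSpace U]
    [NormedAddCommGroup H] [InnerProductSpace ℝ H] [CompleteSpace H]
    (E : Y →L[ℝ] H) (ρ₁ : ℝ) (hρ₁ : 0 < ρ₁)
    (hE : ∀ y : Y, ‖E y‖ ≤ (1 / ρ₁) * ‖y‖)
    (a : Y →ₗ[ℝ] Y →ₗ[ℝ] ℝ) (γ β : ℝ) (hγ : 0 < γ) (hβ : 0 < β)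
    (ha_cont : ∀ y v : Y, |a y v| ≤ γ * ‖y‖ * ‖v‖)
    (ha_coer : ∀ y : Y, β * ‖y‖ ^ 2 ≤ a y y)
    (b : U →ₗ[ℝ] Y →ₗ[ℝ] ℝ) (κ : ℝ) (hκ : 0 < κ)
    (hb_cont : ∀ (w : U) (v : Y), |b w v| ≤ κ * ‖w‖ * ‖v‖)
    (f : Y →L[ℝ] ℝ) (z : H) (α : ℝ) (hα : 0 < α)
    (Uad : Set U) (hUne : Uad.Nonempty) (hUcl : IsClosed Uad) (hUcx : Convex ℝ Uad)
    (S : U → Y) (hS : ∀ (w : U) (v : Y), a (S w) v = b w v + f v)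
    (u : U) (hu : u ∈ Uad)
    (hmin : ∀ u' ∈ Uad,
      (1 / 2) * ‖E (S u) - z‖ ^ 2 + (α / 2) * ‖u‖ ^ 2 ≤
        (1 / 2) * ‖E (S u') - z‖ ^ 2 + (α / 2) * ‖u'‖ ^ 2) :
    ∃ y p : Y, (∀ v : Y, a y v = b u v + f v) ∧
      (∀ v : Y, a v p = ⟪E y - z, E v⟫) ∧
      (∀ v ∈ Uad, 0 ≤ b (v - u) p + α * ⟪u, v - u⟫) := by
  classical
  set y := S u with hy
  -- uniqueness of solutions to the state equation, from coercivity
  have huniq : ∀ y₁ y₂ : Y, (∀ v, a y₁ v = a y₂ v) → y₁ = y₂ := by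
    intro y₁ y₂ h
    have h0 : a (y₁ - y₂) (y₁ - y₂) = 0 := by
      have h1 := h (y₁ - y₂)
      simp only [map_sub, LinearMap.sub_apply] at h1 ⊢
      linarith
    have hc := ha_coer (y₁ - y₂)
    rw [h0] at hc
    have hsq : ‖y₁ - y₂‖ ^ 2 = 0 :=
      le_antisymm (by nlinarith [sq_nonneg ‖y₁ - y₂‖]) (sq_nonneg _)
    exact sub_eq_zero.mp (norm_eq_zero.mp (sq_eq_zero_iff.mp hsq))
  -- the control-to-state map is affine
  have haff : ∀ (w₁ w₂ : U) (t : ℝ),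
      S (w₁ + t • (w₂ - w₁)) = S w₁ + t • (S w₂ - S w₁) := by
    intro w₁ w₂ t
    apply huniq
    intro v
    have h1 := hS (w₁ + t • (w₂ - w₁)) v
    have h2 := hS w₁ v
    have h3 := hS w₂ v
    simp only [map_add, map_smul, map_sub, LinearMap.add_apply, LinearMap.smul_apply,
      LinearMap.sub_apply, smul_eq_mul] at h1 h2 h3 ⊢
    rw [h1, h2, h3]
    ring
  -- the transposed bilinear form as a continuous bilinear map
  set B : Y →L[ℝ] Y →L[ℝ] ℝ := LinearMap.mkContinuous₂ a.flip γ (by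
    intro p w
    have := ha_cont w p
    simp only [LinearMap.flip_apply, Real.norm_eq_abs]
    calc |a w p| ≤ γ * ‖w‖ * ‖p‖ := ha_cont w p
      _ = γ * ‖p‖ * ‖w‖ := by ring) with hB
  have hBapp : ∀ p w : Y, B p w = a w p := fun p w => rfl
  have hcoer : IsCoercive B := by
    refine ⟨β, hβ, fun w => ?_⟩
    have := ha_coer w
    rw [hBapp]
    nlinarith [sq_nonneg ‖w‖]
  obtain ⟨p, hadj⟩ : ∃ p : Y, ∀ v : Y, a v p = ⟪E y - z, E v⟫ := by
    set g : Y := (ContinuousLinearMap.adjoint E) (E y - z) with hg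
    refine ⟨hcoer.continuousLinearEquivOfBilin.symm g, fun v => ?_⟩
    have h1 : ⟪hcoer.continuousLinearEquivOfBilin
        (hcoer.continuousLinearEquivOfBilin.symm g), v⟫ =
        B (hcoer.continuousLinearEquivOfBilin.symm g) v :=
      hcoer.continuousLinearEquivOfBilin_apply _ v
    rw [ContinuousLinearEquiv.apply_symm_apply] at h1
    rw [← hBapp, ← h1, hg, ContinuousLinearMap.adjoint_inner_left]
  clear hBapp hcoer hB
  clear_value B
  clear B
  refine ⟨y, p, fun v => hS u v, hadj, ?_⟩
  -- the variational inequality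
  intro v hv
  set d : Y := S v - S u with hd
  -- the directional-derivative quantity and the quadratic remainder
  set A : ℝ := ⟪E y - z, E d⟫ + α * ⟪u, v - u⟫ with hA
  set Q : ℝ := (1 / 2) * ‖E d‖ ^ 2 + (α / 2) * ‖v - u‖ ^ 2 with hQ
  have hQ0 : 0 ≤ Q := by rw [hQ]; positivity
  clear_value A Q
  have key : ∀ t : ℝ, 0 < t → t ≤ 1 → 0 ≤ A + t * Q := by
    intro t ht0 ht1
    have hmem : u + t • (v - u) ∈ Uad := by
      have := hUcx hu hv (by linarith : (0:ℝ) ≤ 1 - t) (le_of_lt ht0) (by ring)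
      convert this using 1
      module
    have hm := hmin _ hmem
    rw [haff u v t] at hm
    have e1 : E (S u + t • (S v - S u)) - z = (E y - z) + t • E d := by
      simp only [map_add, map_smul, map_sub, hd, hy]
      abel
    rw [e1] at hm
    have e2 : ‖(E y - z) + t • E d‖ ^ 2
        = ‖E y - z‖ ^ 2 + 2 * (t * ⟪E y - z, E d⟫) + t ^ 2 * ‖E d‖ ^ 2 := by
      rw [norm_add_sq_real, real_inner_smul_right, norm_smul]
      simp [Real.norm_eq_abs, mul_pow, sq_abs]
    have e3 : ‖u + t • (v - u)‖ ^ 2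
        = ‖u‖ ^ 2 + 2 * (t * ⟪u, v - u⟫) + t ^ 2 * ‖v - u‖ ^ 2 := by
      rw [norm_add_sq_real, real_inner_smul_right, norm_smul]
      simp [Real.norm_eq_abs, mul_pow, sq_abs]
    rw [e2, e3] at hm
    have h4 : 0 ≤ t * A + t ^ 2 * Q := by rw [hA, hQ]; nlinarith
    have h5 : 0 ≤ t * (A + t * Q) := by nlinarith
    nlinarith
  have hA0 : 0 ≤ A := by
    by_contra hneg
    push_neg at hneg
    set t : ℝ := min 1 ((-A) / (2 * (Q + 1))) with ht
    clear_value t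
    have htpos : 0 < t := by
      rw [ht]
      exact lt_min one_pos (div_pos (by linarith) (by linarith))
    have ht1 : t ≤ 1 := by rw [ht]; exact min_le_left _ _
    have ht2 : t ≤ (-A) / (2 * (Q + 1)) := by rw [ht]; exact min_le_right _ _
    have := key t htpos ht1
    have htq : t * Q ≤ (-A) / 2 := by
      have h6 : t * (Q + 1) ≤ (-A) / 2 := by
        have := mul_le_mul_of_nonneg_right ht2 (by linarith : (0:ℝ) ≤ Q + 1)
        calc t * (Q + 1) ≤ (-A) / (2 * (Q + 1)) * (Q + 1) := this
          _ = (-A) / 2 := by field_simp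
      nlinarith
    linarith
  -- identify A with the desired expression
  have hbd : ⟪E y - z, E d⟫ = b (v - u) p := by
    have h1 := hadj d
    have h2 := hS v p
    have h3 := hS u p
    rw [← h1]
    simp only [hd, map_sub, LinearMap.sub_apply] at h2 h3 ⊢
    linarith
  rw [hA, hbd] at hA0
  exact hA0
end

section
/- Control error bound by auxiliary quantities: suppose (u,y,p) solves the full optimality system and (u_N, y_N, p_N) solves the reduced optimality system, and let ỹ ∈ Y be defined by a(ỹ, v) = b(u_N, v) + f(v) for all v ∈ Y and p̃ ∈ Y by a(v, p̃) = (E y_N − z, E v)_H for all v ∈ Y. Then ‖u − u_N‖_U ≤ (1/(ρ₁ √α))‖ỹ − y_N‖_Y + (κ/α)‖p̃ − p_N‖_Y. -/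
open RealInnerProductSpace

lemma aux_quad_bound (α κ ρ s e T X : ℝ) (hα : 0 < α) (hκ : 0 < κ) (hρ : 0 < ρ)
    (hs0 : 0 < s) (hs : s ^ 2 = α) (he0 : 0 ≤ e) (hT0 : 0 ≤ T) (hX0 : 0 ≤ X)
    (hquad : α * e ^ 2 ≤ κ * T * e + X ^ 2 / (4 * ρ ^ 2)) :
    e ≤ 1 / (ρ * s) * X + κ / α * T := by
  by_cases hcase : e ≤ κ * T / α
  · have h5 : (0:ℝ) ≤ 1 / (ρ * s) * X := by positivity
    have h6 : κ * T / α = κ / α * T := by ring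
    linarith
  · push_neg at hcase
    have hc0 : (0:ℝ) ≤ κ * T / α := by positivity
    have hce : α * (κ * T / α) = κ * T := by field_simp
    set c := κ * T / α with hc
    have hd0 : 0 < e - c := by linarith
    have key : α * (e - c) ^ 2 ≤ X ^ 2 / (4 * ρ ^ 2) := by
      have hce2 : α * (c * e) = κ * T * e := by rw [← mul_assoc, hce]
      have hce3 : α * (c * c) = κ * T * c := by rw [← mul_assoc, hce]
      nlinarith [hquad, hce2, hce3,
        mul_nonneg (mul_nonneg hα.le hc0) hd0.le,
        mul_nonneg (mul_nonneg hκ.le hT0) hd0.le]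
    have key2 : (ρ * s * (e - c)) ^ 2 ≤ X ^ 2 := by
      have h8 : (ρ * s * (e - c)) ^ 2 = ρ ^ 2 * (α * (e - c) ^ 2) := by
        rw [mul_pow, mul_pow, hs]
        ring
      have h9 : ρ ^ 2 * (X ^ 2 / (4 * ρ ^ 2)) = X ^ 2 / 4 := by
        field_simp
      have h10 : ρ ^ 2 * (α * (e - c) ^ 2) ≤ ρ ^ 2 * (X ^ 2 / (4 * ρ ^ 2)) :=
        mul_le_mul_of_nonneg_left key (sq_nonneg ρ)
      rw [h8]
      nlinarith [sq_nonneg X]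
    have key3 : ρ * s * (e - c) ≤ X := by
      nlinarith [key2, mul_pos (mul_pos hρ hs0) hd0, hX0]
    have key4 : e - c ≤ 1 / (ρ * s) * X := by
      rw [one_div, inv_mul_eq_div, le_div_iff₀ (by positivity : (0:ℝ) < ρ * s)]
      nlinarith [key3]
    have h6 : c = κ / α * T := by rw [hc]; ring
    linarith


theorem stmt_6
    {Y U H : Type*}
    [NormedAddCommGroup Y] [InnerProductSpace ℝ Y] [CompleteSpace Y]
    [NormedAddCommGroup U] [InnerProductSpace ℝ U] [CompleteSpace U]
    [NormedAddCommGroup H] [InnerProductSpace ℝ H] [CompleteSpace H]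
    (E : Y →L[ℝ] H) (ρ₁ : ℝ) (hρ₁ : 0 < ρ₁)
    (hE : ∀ y : Y, ‖E y‖ ≤ (1 / ρ₁) * ‖y‖)
    (a : Y →ₗ[ℝ] Y →ₗ[ℝ] ℝ) (γ β : ℝ) (hγ : 0 < γ) (hβ : 0 < β)
    (ha_cont : ∀ y v : Y, |a y v| ≤ γ * ‖y‖ * ‖v‖)
    (ha_coer : ∀ y : Y, β * ‖y‖ ^ 2 ≤ a y y)
    (b : U →ₗ[ℝ] Y →ₗ[ℝ] ℝ) (κ : ℝ) (hκ : 0 < κ)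
    (hb_cont : ∀ (w : U) (v : Y), |b w v| ≤ κ * ‖w‖ * ‖v‖)
    (f : Y →L[ℝ] ℝ) (z : H) (α : ℝ) (hα : 0 < α)
    (Uad : Set U) (hUne : Uad.Nonempty) (hUcl : IsClosed Uad) (hUcx : Convex ℝ Uad)
    (u : U) (y p : Y) (hu : u ∈ Uad)
    (hy : ∀ v : Y, a y v = b u v + f v)
    (hp : ∀ v : Y, a v p = ⟪E y - z, E v⟫)
    (hvi : ∀ v ∈ Uad, 0 ≤ b (v - u) p + α * ⟪u, v - u⟫)
    (YN : Submodule ℝ Y) (hYN : IsClosed (YN : Set Y))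
    (uN : U) (yN pN : Y) (huN : uN ∈ Uad) (hyNm : yN ∈ YN) (hpNm : pN ∈ YN)
    (hyN : ∀ v ∈ YN, a yN v = b uN v + f v)
    (hpN : ∀ v ∈ YN, a v pN = ⟪E yN - z, E v⟫)
    (hviN : ∀ v ∈ Uad, 0 ≤ b (v - uN) pN + α * ⟪uN, v - uN⟫)
    (yt : Y) (hyt : ∀ v : Y, a yt v = b uN v + f v)
    (pt : Y) (hpt : ∀ v : Y, a v pt = ⟪E yN - z, E v⟫)
    :
    ‖u - uN‖ ≤ (1 / (ρ₁ * Real.sqrt α)) * ‖yt - yN‖ + (κ / α) * ‖pt - pN‖ := by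

  set e := ‖u - uN‖ with he
  set X := ‖yt - yN‖ with hX
  set T := ‖pt - pN‖ with hT
  have he0 : 0 ≤ e := norm_nonneg _
  have hX0 : 0 ≤ X := norm_nonneg _
  have hT0 : 0 ≤ T := norm_nonneg _
  -- Step 1: add the two variational inequalities
  have hq1 : α * e ^ 2 ≤ (b (u - uN)) pN - (b (u - uN)) p := by
    have h1 := hvi uN huN
    have h2 := hviN u hu
    have hn : ⟪u - uN, u - uN⟫ = e ^ 2 := real_inner_self_eq_norm_sq _
    simp only [map_sub, LinearMap.sub_apply, inner_sub_left, inner_sub_right,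
      real_inner_comm uN u] at h1 h2 hn ⊢
    nlinarith [h1, h2, hn, hα.le]
  -- Step 2a: bound b(u-uN)(pN - pt)
  have hA : (b (u - uN)) pN - (b (u - uN)) pt ≤ κ * e * T := by
    have h' : |(b (u - uN)) pt - (b (u - uN)) pN| ≤ κ * e * T := by
      have h2 : (b (u - uN)) (pt - pN) = (b (u - uN)) pt - (b (u - uN)) pN :=
        map_sub _ _ _
      have h := hb_cont (u - uN) (pt - pN)
      rw [h2] at h
      exact h
    linarith [neg_le_abs ((b (u - uN)) pt - (b (u - uN)) pN), h']
  -- Step 2b: identity for b(u-uN)(pt - p)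
  have h4 : (b (u - uN)) pt - (b (u - uN)) p = ⟪E yN - E y, E y - E yt⟫ := by
    have e1 := hy pt; have e2 := hy p; have e3 := hyt pt; have e4 := hyt p
    have e5 := hp y; have e6 := hp yt; have e7 := hpt y; have e8 := hpt yt
    simp only [map_sub, LinearMap.sub_apply, inner_sub_left, inner_sub_right]
      at e1 e2 e3 e4 e5 e6 e7 e8 ⊢
    linarith
  -- bound the inner product term
  have hEb : ‖E yN - E yt‖ ≤ 1 / ρ₁ * X := by
    rw [← map_sub]
    calc ‖E (yN - yt)‖ ≤ 1 / ρ₁ * ‖yN - yt‖ := hE _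
    _ = 1 / ρ₁ * X := by rw [hX, norm_sub_rev]
  have hB : ⟪E yN - E y, E y - E yt⟫ ≤ X ^ 2 / (4 * ρ₁ ^ 2) := by
    have hid : ⟪E yN - E y, E y - E yt⟫
        = ⟪E yN - E yt, E y - E yt⟫ - ‖E y - E yt‖ ^ 2 := by
      rw [← real_inner_self_eq_norm_sq, ← inner_sub_left]
      congr 1
      abel
    have hcs := real_inner_le_norm (E yN - E yt) (E y - E yt)
    have hg0 : (0:ℝ) ≤ ‖E y - E yt‖ := norm_nonneg _
    have hM : X ^ 2 / (4 * ρ₁ ^ 2) = (1 / ρ₁ * X) ^ 2 / 4 := by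
      ring
    rw [hid, hM]
    nlinarith [mul_le_mul_of_nonneg_right hEb hg0, hcs,
      sq_nonneg (1 / ρ₁ * X - 2 * ‖E y - E yt‖)]
  -- quadratic inequality
  have hquad : α * e ^ 2 ≤ κ * T * e + X ^ 2 / (4 * ρ₁ ^ 2) := by
    have h5 := h4 ▸ hB
    linarith [hq1, hA, h5]
  -- final algebra
  have hs0 : 0 < Real.sqrt α := Real.sqrt_pos.2 hα
  have hs : Real.sqrt α ^ 2 = α := Real.sq_sqrt hα.le
  exact aux_quad_bound α κ ρ₁ (Real.sqrt α) e T X hα hκ hρ₁ hs0 hs he0 hT0 hX0 hquad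
end

section
/- Adjoint error bound by auxiliary quantities: suppose (u,y,p) solves the full optimality system and (u_N, y_N, p_N) solves the reduced optimality system, and let ỹ ∈ Y be defined by a(ỹ, v) = b(u_N, v) + f(v) for all v ∈ Y and p̃ ∈ Y by a(v, p̃) = (E y_N − z, E v)_H for all v ∈ Y. Then ‖p − p_N‖_Y ≤ (1/(ρ₁² β))(κ/(β ρ₁ √α) + 1)‖ỹ − y_N‖_Y + (κ²/(ρ₁² β² α) + 1)‖p̃ − p_N‖_Y. -/
open RealInnerProductSpace

lemma aux_div_bound {β c M : ℝ} (hβ : 0 < β) (hc : 0 ≤ c) (hM : 0 ≤ M)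
    (h : β * c ^ 2 ≤ M * c) : c ≤ M / β := by
  rcases hc.eq_or_lt with h0 | h0
  · rw [← h0]; positivity
  · rw [le_div_iff₀ hβ]; nlinarith

lemma aux_quad_bound_s8 {α s d A B : ℝ} (hα : 0 < α) (hs : 0 < s) (hs2 : s ^ 2 = α)
    (hd : 0 ≤ d) (hA : 0 ≤ A) (hB : 0 ≤ B) (h : α * d ^ 2 ≤ A ^ 2 + B * d) :
    d ≤ A / s + B / α := by
  by_contra hcon
  push_neg at hcon
  have hd0 : 0 < d := lt_of_le_of_lt (by positivity) hcon
  have hAsd : A < s * d := by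
    have h1 : A / s < d := lt_of_le_of_lt (le_add_of_nonneg_right (by positivity)) hcon
    rwa [div_lt_iff₀ hs, mul_comm] at h1
  have hB' : B < s ^ 2 * d - s * A := by
    have h3 : B / α < d - A / s := by linarith
    rw [div_lt_iff₀ hα] at h3
    have h4 : (d - A / s) * α = s ^ 2 * d - s * A := by
      rw [← hs2]; field_simp
    linarith [h3, h4.le, h4.ge]
  have h5 : B * d < (s ^ 2 * d - s * A) * d := mul_lt_mul_of_pos_right hB' hd0
  have h6 : A * A ≤ A * (s * d) := mul_le_mul_of_nonneg_left hAsd.le hA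
  rw [← hs2] at h
  nlinarith [h, h5, h6]

theorem stmt_8
    {Y U H : Type*}
    [NormedAddCommGroup Y] [InnerProductSpace ℝ Y] [CompleteSpace Y]
    [NormedAddCommGroup U] [InnerProductSpace ℝ U] [CompleteSpace U]
    [NormedAddCommGroup H] [InnerProductSpace ℝ H] [CompleteSpace H]
    (E : Y →L[ℝ] H) (ρ₁ : ℝ) (hρ₁ : 0 < ρ₁)
    (hE : ∀ y : Y, ‖E y‖ ≤ (1 / ρ₁) * ‖y‖)
    (a : Y →ₗ[ℝ] Y →ₗ[ℝ] ℝ) (γ β : ℝ) (hγ : 0 < γ) (hβ : 0 < β)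
    (ha_cont : ∀ y v : Y, |a y v| ≤ γ * ‖y‖ * ‖v‖)
    (ha_coer : ∀ y : Y, β * ‖y‖ ^ 2 ≤ a y y)
    (b : U →ₗ[ℝ] Y →ₗ[ℝ] ℝ) (κ : ℝ) (hκ : 0 < κ)
    (hb_cont : ∀ (w : U) (v : Y), |b w v| ≤ κ * ‖w‖ * ‖v‖)
    (f : Y →L[ℝ] ℝ) (z : H) (α : ℝ) (hα : 0 < α)
    (Uad : Set U) (hUne : Uad.Nonempty) (hUcl : IsClosed Uad) (hUcx : Convex ℝ Uad)
    (u : U) (y p : Y) (hu : u ∈ Uad)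
    (hy : ∀ v : Y, a y v = b u v + f v)
    (hp : ∀ v : Y, a v p = ⟪E y - z, E v⟫)
    (hvi : ∀ v ∈ Uad, 0 ≤ b (v - u) p + α * ⟪u, v - u⟫)
    (YN : Submodule ℝ Y) (hYN : IsClosed (YN : Set Y))
    (uN : U) (yN pN : Y) (huN : uN ∈ Uad) (hyNm : yN ∈ YN) (hpNm : pN ∈ YN)
    (hyN : ∀ v ∈ YN, a yN v = b uN v + f v)
    (hpN : ∀ v ∈ YN, a v pN = ⟪E yN - z, E v⟫)
    (hviN : ∀ v ∈ Uad, 0 ≤ b (v - uN) pN + α * ⟪uN, v - uN⟫)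
    (yt : Y) (hyt : ∀ v : Y, a yt v = b uN v + f v)
    (pt : Y) (hpt : ∀ v : Y, a v pt = ⟪E yN - z, E v⟫)
    :
    ‖p - pN‖ ≤ (1 / (ρ₁ ^ 2 * β)) * (κ / (β * ρ₁ * Real.sqrt α) + 1) * ‖yt - yN‖
      + (κ ^ 2 / (ρ₁ ^ 2 * β ^ 2 * α) + 1) * ‖pt - pN‖ := by
  set s := Real.sqrt α with hsdef
  have hs0 : 0 < s := Real.sqrt_pos.mpr hα
  have hs2 : s ^ 2 = α := Real.sq_sqrt hα.le
  -- adjoint error equation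
  have hadj : ∀ v : Y, a v (p - pt) = ⟪E y - E yN, E v⟫ := by
    intro v
    rw [map_sub, hp v, hpt v, ← inner_sub_left]
    congr 1
    abel
  -- state error equation
  have hstate : ∀ v : Y, a (y - yt) v = b (u - uN) v := by
    intro v
    simp only [map_sub, LinearMap.sub_apply, hy v, hyt v]
    ring
  -- bound ‖p - pt‖
  have h2 : ‖p - pt‖ ≤ 1 / ρ₁ ^ 2 * ‖y - yN‖ / β := by
    apply aux_div_bound hβ (norm_nonneg _) (by positivity)
    calc β * ‖p - pt‖ ^ 2 ≤ a (p - pt) (p - pt) := ha_coer _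
      _ = ⟪E y - E yN, E (p - pt)⟫ := hadj _
      _ ≤ ‖E y - E yN‖ * ‖E (p - pt)‖ := real_inner_le_norm _ _
      _ ≤ (1 / ρ₁ * ‖y - yN‖) * (1 / ρ₁ * ‖p - pt‖) := by
          apply mul_le_mul _ (hE _) (norm_nonneg _) (by positivity)
          rw [← map_sub]; exact hE _
      _ = (1 / ρ₁ ^ 2 * ‖y - yN‖) * ‖p - pt‖ := by ring
  -- bound ‖y - yt‖
  have h3 : ‖y - yt‖ ≤ κ * ‖u - uN‖ / β := by
    apply aux_div_bound hβ (norm_nonneg _) (by positivity)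
    calc β * ‖y - yt‖ ^ 2 ≤ a (y - yt) (y - yt) := ha_coer _
      _ = b (u - uN) (y - yt) := hstate _
      _ ≤ |b (u - uN) (y - yt)| := le_abs_self _
      _ ≤ κ * ‖u - uN‖ * ‖y - yt‖ := hb_cont _ _
  -- variational inequality combination
  have h4 : α * ‖u - uN‖ ^ 2 ≤ b (uN - u) (p - pN) := by
    have hv1 := hvi uN huN
    have hv2 := hviN u hu
    have e1 : b (u - uN) pN = - b (uN - u) pN := by
      simp only [map_sub, LinearMap.sub_apply]; ring
    have e2 : ⟪u, uN - u⟫ + ⟪uN, u - uN⟫ = - ‖u - uN‖ ^ 2 := by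
      rw [← real_inner_self_eq_norm_sq]
      simp only [inner_sub_left, inner_sub_right]
      rw [real_inner_comm uN u]
      ring
    have e2' : α * ⟪u, uN - u⟫ + α * ⟪uN, u - uN⟫ = - (α * ‖u - uN‖ ^ 2) := by
      linear_combination α * e2
    have e3 : b (uN - u) (p - pN) = b (uN - u) p - b (uN - u) pN := by
      rw [map_sub]
    linarith
  -- identify first piece
  have h5 : b (uN - u) (p - pt) = ⟪E y - E yN, E (yt - y)⟫ := by
    have e : b (uN - u) (p - pt) = a (yt - y) (p - pt) := by
      have hs' := hstate (p - pt)
      simp only [map_sub, LinearMap.sub_apply] at hs' ⊢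
      linarith
    rw [e, hadj (yt - y)]
  -- bound the inner product piece
  have h6 : ⟪E y - E yN, E (yt - y)⟫ ≤ (1 / (2 * ρ₁) * ‖yt - yN‖) ^ 2 := by
    have edec : E y - E yN = (E y - E yt) + (E yt - E yN) := by abel
    have eneg : E (yt - y) = -(E y - E yt) := by rw [map_sub]; abel
    rw [edec, eneg, inner_add_left, inner_neg_right, inner_neg_right,
      real_inner_self_eq_norm_sq]
    have hcs : -⟪E yt - E yN, E y - E yt⟫ ≤ ‖E yt - E yN‖ * ‖E y - E yt‖ := by
      have h1 := abs_real_inner_le_norm (E yt - E yN) (E y - E yt)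
      have h2 := neg_abs_le (⟪E yt - E yN, E y - E yt⟫)
      linarith
    have hb1 : ‖E yt - E yN‖ ≤ 2 * (1 / (2 * ρ₁) * ‖yt - yN‖) := by
      have h1 : ‖E yt - E yN‖ ≤ 1 / ρ₁ * ‖yt - yN‖ := by
        rw [← map_sub]; exact hE _
      have h2 : 1 / ρ₁ * ‖yt - yN‖ = 2 * (1 / (2 * ρ₁) * ‖yt - yN‖) := by
        field_simp
      linarith
    have ht0 : (0:ℝ) ≤ ‖E y - E yt‖ := norm_nonneg _
    have hmul : ‖E yt - E yN‖ * ‖E y - E yt‖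
        ≤ 2 * (1 / (2 * ρ₁) * ‖yt - yN‖) * ‖E y - E yt‖ :=
      mul_le_mul_of_nonneg_right hb1 ht0
    nlinarith [sq_nonneg (‖E y - E yt‖ - 1 / (2 * ρ₁) * ‖yt - yN‖)]
  -- bound on control error
  have h7 : ‖u - uN‖ ≤ (1 / (2 * ρ₁) * ‖yt - yN‖) / s + (κ * ‖pt - pN‖) / α := by
    apply aux_quad_bound_s8 hα hs0 hs2 (norm_nonneg _) (by positivity) (by positivity)
    have hsplit : b (uN - u) (p - pN) = b (uN - u) (p - pt) + b (uN - u) (pt - pN) := by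
      simp only [map_sub]; ring
    have hbd : b (uN - u) (pt - pN) ≤ κ * ‖pt - pN‖ * ‖u - uN‖ := by
      calc b (uN - u) (pt - pN) ≤ |b (uN - u) (pt - pN)| := le_abs_self _
        _ ≤ κ * ‖uN - u‖ * ‖pt - pN‖ := hb_cont _ _
        _ = κ * ‖pt - pN‖ * ‖u - uN‖ := by rw [norm_sub_rev]; ring
    linarith [h4, h5.le, h5.ge, h6, hbd, hsplit.le, hsplit.ge]
  -- triangle inequalities
  have htr1 : ‖p - pN‖ ≤ ‖p - pt‖ + ‖pt - pN‖ := by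
    have : p - pN = (p - pt) + (pt - pN) := by abel
    rw [this]; exact norm_add_le _ _
  have htr2 : ‖y - yN‖ ≤ κ * ‖u - uN‖ / β + ‖yt - yN‖ := by
    have e : y - yN = (y - yt) + (yt - yN) := by abel
    calc ‖y - yN‖ ≤ ‖y - yt‖ + ‖yt - yN‖ := by rw [e]; exact norm_add_le _ _
      _ ≤ κ * ‖u - uN‖ / β + ‖yt - yN‖ := by linarith [h3]
  -- loosen control bound
  have h7' : ‖u - uN‖ ≤ (1 / ρ₁ * ‖yt - yN‖) / s + (κ * ‖pt - pN‖) / α := by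
    have hhalf : 1 / (2 * ρ₁) * ‖yt - yN‖ ≤ 1 / ρ₁ * ‖yt - yN‖ := by
      apply mul_le_mul_of_nonneg_right _ (norm_nonneg _)
      rw [div_le_div_iff₀ (by positivity) hρ₁]
      nlinarith
    calc ‖u - uN‖ ≤ (1 / (2 * ρ₁) * ‖yt - yN‖) / s + (κ * ‖pt - pN‖) / α := h7
      _ ≤ (1 / ρ₁ * ‖yt - yN‖) / s + (κ * ‖pt - pN‖) / α := by gcongr
  -- combine
  have hkey : ‖p - pN‖ ≤ 1 / ρ₁ ^ 2 * (κ * ((1 / ρ₁ * ‖yt - yN‖) / s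
      + (κ * ‖pt - pN‖) / α) / β + ‖yt - yN‖) / β + ‖pt - pN‖ := by
    calc ‖p - pN‖ ≤ ‖p - pt‖ + ‖pt - pN‖ := htr1
      _ ≤ 1 / ρ₁ ^ 2 * ‖y - yN‖ / β + ‖pt - pN‖ := by linarith [h2]
      _ ≤ 1 / ρ₁ ^ 2 * (κ * ‖u - uN‖ / β + ‖yt - yN‖) / β + ‖pt - pN‖ := by
          gcongr
      _ ≤ 1 / ρ₁ ^ 2 * (κ * ((1 / ρ₁ * ‖yt - yN‖) / s
            + (κ * ‖pt - pN‖) / α) / β + ‖yt - yN‖) / β + ‖pt - pN‖ := by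
          gcongr
  refine hkey.trans (le_of_eq ?_)
  rw [← hs2]
  have hs0' : s ≠ 0 := ne_of_gt hs0
  have hρ' : ρ₁ ≠ 0 := ne_of_gt hρ₁
  have hβ' : β ≠ 0 := ne_of_gt hβ
  field_simp
  ring
end

section
/- A posteriori upper bound (main theorem, upper part): suppose (u,y,p) solves the full optimality system and (u_N, y_N, p_N) solves the reduced optimality system. Then ‖u − u_N‖_U + ‖y − y_N‖_Y + ‖p − p_N‖_Y ≤ c₁‖r_y‖_{Y*} + c₂‖r_p‖_{Y*}, where c₁ := (1/β)[1/(ρ₁√α) + (1 + 1/(ρ₁²β))(κ/(β ρ₁ √α) + 1)] and c₂ := (1/β)(κ/α + κ²/(βα) + κ²/(ρ₁²β²α) + 1). -/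
open RealInnerProductSpace

lemma laxMilgram_exists {V : Type*} [NormedAddCommGroup V] [InnerProductSpace ℝ V]
    [CompleteSpace V] {B : V →L[ℝ] V →L[ℝ] ℝ} (hB : IsCoercive B) (g : V →L[ℝ] ℝ) :
    ∃ e : V, ∀ v, B e v = g v := by
  refine ⟨hB.continuousLinearEquivOfBilin.symm ((InnerProductSpace.toDual ℝ V).symm g),
    fun v => ?_⟩
  rw [← hB.continuousLinearEquivOfBilin_apply, ContinuousLinearEquiv.apply_symm_apply,
    InnerProductSpace.toDual_symm_apply]

lemma quad_aux {s t A B : ℝ} (hs : 0 < s) (ht : 0 ≤ t) (hA : 0 ≤ A) (hB : 0 ≤ B)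
    (h : s^2 * t^2 ≤ A^2/4 + B*t) : s^2*t ≤ B + s*A/2 := by
  by_contra hcon
  push_neg at hcon
  have ht0 : 0 < t := by nlinarith [mul_pos hs hs]
  have h1 : 2*s*A*t < A^2 := by nlinarith [mul_lt_mul_of_pos_right hcon ht0]
  have hA0 : 0 < A := by nlinarith [mul_nonneg (mul_nonneg hs.le hA) ht]
  have h3 : 2*s*t < A := lt_of_mul_lt_mul_left (by nlinarith) hA0.le
  have h4 : 2*s^2*t < s*A := by nlinarith [mul_lt_mul_of_pos_left h3 hs]
  linarith

lemma cancel_aux {c C x : ℝ} (hx : 0 ≤ x) (hC : 0 ≤ C) (h : c * x ^ 2 ≤ C * x) : c * x ≤ C := by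
  rcases hx.eq_or_lt with h0 | h0
  · simp [← h0, hC]
  · exact le_of_mul_le_mul_right (by nlinarith) h0

set_option maxHeartbeats 1600000 in
theorem stmt_9
    {Y U H : Type*}
    [NormedAddCommGroup Y] [InnerProductSpace ℝ Y] [CompleteSpace Y]
    [NormedAddCommGroup U] [InnerProductSpace ℝ U] [CompleteSpace U]
    [NormedAddCommGroup H] [InnerProductSpace ℝ H] [CompleteSpace H]
    (E : Y →L[ℝ] H) (ρ₁ : ℝ) (hρ₁ : 0 < ρ₁)
    (hE : ∀ y : Y, ‖E y‖ ≤ (1 / ρ₁) * ‖y‖)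
    (a : Y →ₗ[ℝ] Y →ₗ[ℝ] ℝ) (γ β : ℝ) (hγ : 0 < γ) (hβ : 0 < β)
    (ha_cont : ∀ y v : Y, |a y v| ≤ γ * ‖y‖ * ‖v‖)
    (ha_coer : ∀ y : Y, β * ‖y‖ ^ 2 ≤ a y y)
    (b : U →ₗ[ℝ] Y →ₗ[ℝ] ℝ) (κ : ℝ) (hκ : 0 < κ)
    (hb_cont : ∀ (w : U) (v : Y), |b w v| ≤ κ * ‖w‖ * ‖v‖)
    (f : Y →L[ℝ] ℝ) (z : H) (α : ℝ) (hα : 0 < α)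
    (Uad : Set U) (hUne : Uad.Nonempty) (hUcl : IsClosed Uad) (hUcx : Convex ℝ Uad)
    (u : U) (y p : Y) (hu : u ∈ Uad)
    (hy : ∀ v : Y, a y v = b u v + f v)
    (hp : ∀ v : Y, a v p = ⟪E y - z, E v⟫)
    (hvi : ∀ v ∈ Uad, 0 ≤ b (v - u) p + α * ⟪u, v - u⟫)
    (YN : Submodule ℝ Y) (hYN : IsClosed (YN : Set Y))
    (uN : U) (yN pN : Y) (huN : uN ∈ Uad) (hyNm : yN ∈ YN) (hpNm : pN ∈ YN)
    (hyN : ∀ v ∈ YN, a yN v = b uN v + f v)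
    (hpN : ∀ v ∈ YN, a v pN = ⟪E yN - z, E v⟫)
    (hviN : ∀ v ∈ Uad, 0 ≤ b (v - uN) pN + α * ⟪uN, v - uN⟫)
    (ry : Y →L[ℝ] ℝ) (hry : ∀ v : Y, ry v = b uN v + f v - a yN v)
    (rp : Y →L[ℝ] ℝ) (hrp : ∀ v : Y, rp v = ⟪E yN - z, E v⟫ - a v pN)
    :
    ‖u - uN‖ + ‖y - yN‖ + ‖p - pN‖ ≤
      ((1 / β) * (1 / (ρ₁ * Real.sqrt α)
        + (1 + 1 / (ρ₁ ^ 2 * β)) * (κ / (β * ρ₁ * Real.sqrt α) + 1))) * ‖ry‖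
      + ((1 / β) * (κ / α + κ ^ 2 / (β * α) + κ ^ 2 / (ρ₁ ^ 2 * β ^ 2 * α) + 1)) * ‖rp‖ := by
  obtain ⟨s, hsdef⟩ : ∃ s : ℝ, Real.sqrt α = s := ⟨_, rfl⟩
  rw [hsdef]
  have hs : 0 < s := hsdef ▸ Real.sqrt_pos.mpr hα
  have hs2 : s ^ 2 = α := hsdef ▸ Real.sq_sqrt hα.le
  have hE' : ∀ v : Y, ρ₁ * ‖E v‖ ≤ ‖v‖ := by
    intro v
    have h1 := hE v
    have h2 : (1 / ρ₁) * ‖v‖ = ‖v‖ / ρ₁ := by ring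
    rw [mul_comm, ← le_div_iff₀ hρ₁]
    linarith
  -- the continuous bilinear form
  obtain ⟨A, hA⟩ : ∃ A : Y →L[ℝ] Y →L[ℝ] ℝ, ∀ x v : Y, A x v = a x v :=
    ⟨LinearMap.mkContinuous₂ a γ (fun x v => by
      rw [Real.norm_eq_abs]; exact ha_cont x v), fun _ _ => rfl⟩
  have hAc : IsCoercive A := ⟨β, hβ, fun v => by
    rw [hA]
    calc β * ‖v‖ * ‖v‖ = β * ‖v‖ ^ 2 := by ring
      _ ≤ a v v := ha_coer v⟩
  have hAcf : IsCoercive A.flip := ⟨β, hβ, fun v => by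
    rw [ContinuousLinearMap.flip_apply, hA]
    calc β * ‖v‖ * ‖v‖ = β * ‖v‖ ^ 2 := by ring
      _ ≤ a v v := ha_coer v⟩
  -- Lax–Milgram solutions
  obtain ⟨e, he⟩ := laxMilgram_exists hAc ry
  have he' : ∀ v, a e v = ry v := fun v => by rw [← hA]; exact he v
  obtain ⟨q, hq⟩ := laxMilgram_exists hAcf rp
  have hq' : ∀ v, a v q = rp v := fun v => by
    have h1 := hq v
    rwa [ContinuousLinearMap.flip_apply, hA] at h1
  -- norm bounds on e and q
  have hne : β * ‖e‖ ≤ ‖ry‖ := by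
    apply cancel_aux (norm_nonneg e) (norm_nonneg ry)
    calc β * ‖e‖ ^ 2 ≤ a e e := ha_coer e
      _ = ry e := he' e
      _ ≤ ‖ry‖ * ‖e‖ := (le_abs_self _).trans (Real.norm_eq_abs _ ▸ ry.le_opNorm e)
  have hnq : β * ‖q‖ ≤ ‖rp‖ := by
    apply cancel_aux (norm_nonneg q) (norm_nonneg rp)
    calc β * ‖q‖ ^ 2 ≤ a q q := ha_coer q
      _ = rp q := hq' q
      _ ≤ ‖rp‖ * ‖q‖ := (le_abs_self _).trans (Real.norm_eq_abs _ ▸ rp.le_opNorm q)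
  -- d = y - yN - e satisfies a d v = b (u - uN) v
  obtain ⟨d, hddef⟩ : ∃ d : Y, d = y - yN - e := ⟨_, rfl⟩
  have hd : ∀ v, a d v = b (u - uN) v := by
    intro v
    have e1 : a d v = a y v - a yN v - a e v := by
      rw [hddef, map_sub a, map_sub a, LinearMap.sub_apply, LinearMap.sub_apply]
    have e2 : b (u - uN) v = b u v - b uN v := by
      rw [map_sub b, LinearMap.sub_apply]
    have h1 := hy v
    have h2 := hry v
    have h3 := he' v
    linarith
  have hnd : β * ‖d‖ ≤ κ * ‖u - uN‖ := by
    apply cancel_aux (norm_nonneg d) (by positivity)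
    calc β * ‖d‖ ^ 2 ≤ a d d := ha_coer d
      _ = b (u - uN) d := hd d
      _ ≤ κ * ‖u - uN‖ * ‖d‖ := (le_abs_self _).trans (hb_cont _ _)
  -- w = p - pN - q satisfies a v w = ⟪E (y - yN), E v⟫
  obtain ⟨w, hwdef⟩ : ∃ w : Y, w = p - pN - q := ⟨_, rfl⟩
  have hw : ∀ v, a v w = ⟪E (y - yN), E v⟫ := by
    intro v
    have e1 : a v w = a v p - a v pN - a v q := by
      rw [hwdef, map_sub (a v), map_sub (a v)]
    have e2 : ⟪E (y - yN), E v⟫ = ⟪E y - z, E v⟫ - ⟪E yN - z, E v⟫ := by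
      rw [E.map_sub, inner_sub_left, inner_sub_left, inner_sub_left]
      ring
    have h1 := hp v
    have h2 := hrp v
    have h3 := hq' v
    linarith
  have hnw : ρ₁ ^ 2 * β * ‖w‖ ≤ ‖y - yN‖ := by
    apply cancel_aux (norm_nonneg w) (norm_nonneg _)
    have step : β * ‖w‖ ^ 2 ≤ ‖E (y - yN)‖ * ‖E w‖ := by
      calc β * ‖w‖ ^ 2 ≤ a w w := ha_coer w
        _ = ⟪E (y - yN), E w⟫ := hw w
        _ ≤ ‖E (y - yN)‖ * ‖E w‖ := real_inner_le_norm _ _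
    nlinarith [mul_le_mul_of_nonneg_left step (sq_nonneg ρ₁),
      mul_le_mul (hE' (y - yN)) (hE' w) (by positivity) (norm_nonneg _)]
  -- variational inequality estimate
  have hquad0 : α * ‖u - uN‖ ^ 2 ≤ b (uN - u) (p - pN) := by
    have h1 := hvi uN huN
    have h2 := hviN u hu
    have e1 : b (uN - u) (p - pN) = b (uN - u) p - b (uN - u) pN :=
      map_sub (b (uN - u)) p pN
    have e2 : b (u - uN) pN = -(b (uN - u) pN) := by
      rw [map_sub b, map_sub b, LinearMap.sub_apply, LinearMap.sub_apply]
      ring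
    have e3 : ⟪u, uN - u⟫ + ⟪uN, u - uN⟫ = -‖u - uN‖ ^ 2 := by
      have hcomm := real_inner_comm u uN
      rw [← real_inner_self_eq_norm_sq]
      simp only [inner_sub_left, inner_sub_right]
      linarith
    have e3' : α * ⟪u, uN - u⟫ + α * ⟪uN, u - uN⟫ = -(α * ‖u - uN‖ ^ 2) := by
      linear_combination α * e3
    linarith
  have hsplit : b (uN - u) (p - pN) = b (uN - u) w + b (uN - u) q := by
    have hpq : p - pN = w + q := by rw [hwdef]; abel
    rw [hpq, map_add (b (uN - u))]
  have hbw : b (uN - u) w ≤ ‖E e‖ ^ 2 / 4 := by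
    have hx : b (uN - u) w = -(b (u - uN) w) := by
      rw [map_sub b, map_sub b, LinearMap.sub_apply, LinearMap.sub_apply]
      ring
    rw [hx, ← hd w, hw d]
    have hEd : E d = E (y - yN) - E e := by rw [hddef, E.map_sub]
    rw [hEd, inner_sub_right]
    have hgg : ⟪E (y - yN), E (y - yN)⟫ = ‖E (y - yN)‖ ^ 2 := real_inner_self_eq_norm_sq _
    have hle := real_inner_le_norm (E (y - yN)) (E e)
    nlinarith [sq_nonneg (‖E (y - yN)‖ - ‖E e‖ / 2)]
  have hbq : b (uN - u) q ≤ κ * ‖u - uN‖ * ‖q‖ := by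
    have h1 := (le_abs_self _).trans (hb_cont (uN - u) q)
    rwa [norm_sub_rev] at h1
  -- master quadratic inequality and key control bound
  have hmaster : s ^ 2 * ‖u - uN‖ ^ 2 ≤ ‖E e‖ ^ 2 / 4 + (κ * ‖q‖) * ‖u - uN‖ := by
    rw [hs2]
    nlinarith [hquad0, hsplit, hbw, hbq]
  have hkey : α * ‖u - uN‖ ≤ κ * ‖q‖ + s * ‖E e‖ / 2 := by
    have h1 := quad_aux hs (norm_nonneg _) (norm_nonneg _) (by positivity) hmaster
    rwa [hs2] at h1
  have hEe : ρ₁ * β * ‖E e‖ ≤ ‖ry‖ := by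
    nlinarith [mul_le_mul_of_nonneg_left (hE' e) hβ.le, hne]
  -- linear bounds
  have L3 : α * β * ρ₁ * ‖u - uN‖ ≤ κ * ρ₁ * ‖rp‖ + s * ‖ry‖ / 2 := by
    nlinarith [mul_le_mul_of_nonneg_left hkey (by positivity : (0:ℝ) ≤ β * ρ₁),
      mul_le_mul_of_nonneg_left hnq (by positivity : (0:ℝ) ≤ κ * ρ₁),
      mul_le_mul_of_nonneg_left hEe (by positivity : (0:ℝ) ≤ s / 2)]
  have L1 : β * ‖y - yN‖ ≤ κ * ‖u - uN‖ + ‖ry‖ := by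
    have htr : ‖y - yN‖ ≤ ‖d‖ + ‖e‖ := by
      have hde : y - yN = d + e := by rw [hddef]; abel
      rw [hde]; exact norm_add_le _ _
    nlinarith [mul_le_mul_of_nonneg_left htr hβ.le, hnd, hne]
  have L2 : ρ₁ ^ 2 * β * ‖p - pN‖ ≤ ‖y - yN‖ + ρ₁ ^ 2 * ‖rp‖ := by
    have htr : ‖p - pN‖ ≤ ‖w‖ + ‖q‖ := by
      have hpq : p - pN = w + q := by rw [hwdef]; abel
      rw [hpq]; exact norm_add_le _ _
    nlinarith [mul_le_mul_of_nonneg_left htr (by positivity : (0:ℝ) ≤ ρ₁ ^ 2 * β), hnw,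
      mul_le_mul_of_nonneg_left hnq (by positivity : (0:ℝ) ≤ ρ₁ ^ 2)]
  -- division forms
  have Ht : ‖u - uN‖ ≤ κ / (α * β) * ‖rp‖ + 1 / (2 * s * β * ρ₁) * ‖ry‖ := by
    have hrw : κ / (α * β) * ‖rp‖ + 1 / (2 * s * β * ρ₁) * ‖ry‖
        = (κ * ρ₁ * ‖rp‖ + s * ‖ry‖ / 2) / (α * β * ρ₁) := by
      rw [← hs2]; field_simp
    rw [hrw, le_div_iff₀ (by positivity)]
    nlinarith [L3]
  have HN : ‖y - yN‖ ≤ κ / β * ‖u - uN‖ + 1 / β * ‖ry‖ := by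
    have hrw : κ / β * ‖u - uN‖ + 1 / β * ‖ry‖ = (κ * ‖u - uN‖ + ‖ry‖) / β := by
      field_simp
    rw [hrw, le_div_iff₀ hβ]
    nlinarith [L1]
  have HP : ‖p - pN‖ ≤ 1 / (ρ₁ ^ 2 * β) * ‖y - yN‖ + 1 / β * ‖rp‖ := by
    have hrw : 1 / (ρ₁ ^ 2 * β) * ‖y - yN‖ + 1 / β * ‖rp‖
        = (‖y - yN‖ + ρ₁ ^ 2 * ‖rp‖) / (ρ₁ ^ 2 * β) := by
      field_simp
    rw [hrw, le_div_iff₀ (by positivity)]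
    nlinarith [L2]
  -- combine
  have hK : (0:ℝ) ≤ 1 + 1 / (ρ₁ ^ 2 * β) := by positivity
  have hK' : (0:ℝ) ≤ 1 + (1 + 1 / (ρ₁ ^ 2 * β)) * (κ / β) := by positivity
  have hC1 : (1 + (1 + 1 / (ρ₁ ^ 2 * β)) * (κ / β)) * (1 / (2 * s * β * ρ₁))
        + (1 + 1 / (ρ₁ ^ 2 * β)) / β
      ≤ (1 / β) * (1 / (ρ₁ * s)
        + (1 + 1 / (ρ₁ ^ 2 * β)) * (κ / (β * ρ₁ * s) + 1)) := by
    have hId : (1 / β) * (1 / (ρ₁ * s)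
          + (1 + 1 / (ρ₁ ^ 2 * β)) * (κ / (β * ρ₁ * s) + 1))
        = ((1 + (1 + 1 / (ρ₁ ^ 2 * β)) * (κ / β)) * (1 / (2 * s * β * ρ₁))
            + (1 + 1 / (ρ₁ ^ 2 * β)) / β)
          + (1 / (2 * s * β * ρ₁) + (1 + 1 / (ρ₁ ^ 2 * β)) * κ / (2 * s * β ^ 2 * ρ₁)) := by
      field_simp
      ring
    have hpos : (0:ℝ) ≤ 1 / (2 * s * β * ρ₁)
        + (1 + 1 / (ρ₁ ^ 2 * β)) * κ / (2 * s * β ^ 2 * ρ₁) := by positivity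
    linarith
  have hC2 : (1 + (1 + 1 / (ρ₁ ^ 2 * β)) * (κ / β)) * (κ / (α * β)) + 1 / β
      = (1 / β) * (κ / α + κ ^ 2 / (β * α) + κ ^ 2 / (ρ₁ ^ 2 * β ^ 2 * α) + 1) := by
    field_simp
    ring
  calc ‖u - uN‖ + ‖y - yN‖ + ‖p - pN‖
      ≤ ‖u - uN‖ + ‖y - yN‖ + (1 / (ρ₁ ^ 2 * β) * ‖y - yN‖ + 1 / β * ‖rp‖) := by
        linarith [HP]
    _ = ‖u - uN‖ + (1 + 1 / (ρ₁ ^ 2 * β)) * ‖y - yN‖ + 1 / β * ‖rp‖ := by ring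
    _ ≤ ‖u - uN‖ + (1 + 1 / (ρ₁ ^ 2 * β)) * (κ / β * ‖u - uN‖ + 1 / β * ‖ry‖)
          + 1 / β * ‖rp‖ := by
        nlinarith [mul_le_mul_of_nonneg_left HN hK]
    _ = (1 + (1 + 1 / (ρ₁ ^ 2 * β)) * (κ / β)) * ‖u - uN‖
          + (1 + 1 / (ρ₁ ^ 2 * β)) / β * ‖ry‖ + 1 / β * ‖rp‖ := by ring
    _ ≤ (1 + (1 + 1 / (ρ₁ ^ 2 * β)) * (κ / β))
            * (κ / (α * β) * ‖rp‖ + 1 / (2 * s * β * ρ₁) * ‖ry‖)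
          + (1 + 1 / (ρ₁ ^ 2 * β)) / β * ‖ry‖ + 1 / β * ‖rp‖ := by
        nlinarith [mul_le_mul_of_nonneg_left Ht hK']
    _ = ((1 + (1 + 1 / (ρ₁ ^ 2 * β)) * (1 / (2 * s * β * ρ₁)) * (κ / β)) * 0
          + (((1 + (1 + 1 / (ρ₁ ^ 2 * β)) * (κ / β)) * (1 / (2 * s * β * ρ₁))
            + (1 + 1 / (ρ₁ ^ 2 * β)) / β) * ‖ry‖
          + ((1 + (1 + 1 / (ρ₁ ^ 2 * β)) * (κ / β)) * (κ / (α * β)) + 1 / β) * ‖rp‖)) := by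
        ring
    _ ≤ ((1 / β) * (1 / (ρ₁ * s)
            + (1 + 1 / (ρ₁ ^ 2 * β)) * (κ / (β * ρ₁ * s) + 1))) * ‖ry‖
          + ((1 / β) * (κ / α + κ ^ 2 / (β * α) + κ ^ 2 / (ρ₁ ^ 2 * β ^ 2 * α) + 1)) * ‖rp‖ := by
        rw [← hC2]
        have h1 := mul_le_mul_of_nonneg_right hC1 (norm_nonneg ry)
        linarith
end

section
/- A posteriori lower bound (main theorem, lower part): suppose (u,y,p) solves the full optimality system and (u_N, y_N, p_N) solves the reduced optimality system. Then c₃‖r_y‖_{Y*} + c₄‖r_p‖_{Y*} ≤ ‖u − u_N‖_U + ‖y − y_N‖_Y + ‖p − p_N‖_Y, where c₃ := (1/(2γ)) · max(κ/β, 1)^{−1} and c₄ := (1/(2γ)) · max(1/(ρ₁²β), 1)^{−1}. -/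
open RealInnerProductSpace

set_option maxHeartbeats 800000 in
theorem stmt_10
    {Y U H : Type*}
    [NormedAddCommGroup Y] [InnerProductSpace ℝ Y] [CompleteSpace Y]
    [NormedAddCommGroup U] [InnerProductSpace ℝ U] [CompleteSpace U]
    [NormedAddCommGroup H] [InnerProductSpace ℝ H] [CompleteSpace H]
    (E : Y →L[ℝ] H) (ρ₁ : ℝ) (hρ₁ : 0 < ρ₁)
    (hE : ∀ y : Y, ‖E y‖ ≤ (1 / ρ₁) * ‖y‖)
    (a : Y →ₗ[ℝ] Y →ₗ[ℝ] ℝ) (γ β : ℝ) (hγ : 0 < γ) (hβ : 0 < β)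
    (ha_cont : ∀ y v : Y, |a y v| ≤ γ * ‖y‖ * ‖v‖)
    (ha_coer : ∀ y : Y, β * ‖y‖ ^ 2 ≤ a y y)
    (b : U →ₗ[ℝ] Y →ₗ[ℝ] ℝ) (κ : ℝ) (hκ : 0 < κ)
    (hb_cont : ∀ (w : U) (v : Y), |b w v| ≤ κ * ‖w‖ * ‖v‖)
    (f : Y →L[ℝ] ℝ) (z : H) (α : ℝ) (hα : 0 < α)
    (Uad : Set U) (hUne : Uad.Nonempty) (hUcl : IsClosed Uad) (hUcx : Convex ℝ Uad)
    (u : U) (y p : Y) (hu : u ∈ Uad)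
    (hy : ∀ v : Y, a y v = b u v + f v)
    (hp : ∀ v : Y, a v p = ⟪E y - z, E v⟫)
    (hvi : ∀ v ∈ Uad, 0 ≤ b (v - u) p + α * ⟪u, v - u⟫)
    (YN : Submodule ℝ Y) (hYN : IsClosed (YN : Set Y))
    (uN : U) (yN pN : Y) (huN : uN ∈ Uad) (hyNm : yN ∈ YN) (hpNm : pN ∈ YN)
    (hyN : ∀ v ∈ YN, a yN v = b uN v + f v)
    (hpN : ∀ v ∈ YN, a v pN = ⟪E yN - z, E v⟫)
    (hviN : ∀ v ∈ Uad, 0 ≤ b (v - uN) pN + α * ⟪uN, v - uN⟫)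
    (ry : Y →L[ℝ] ℝ) (hry : ∀ v : Y, ry v = b uN v + f v - a yN v)
    (rp : Y →L[ℝ] ℝ) (hrp : ∀ v : Y, rp v = ⟪E yN - z, E v⟫ - a v pN)
    :
    ((1 / (2 * γ)) * (max (κ / β) 1)⁻¹) * ‖ry‖
      + ((1 / (2 * γ)) * (max (1 / (ρ₁ ^ 2 * β)) 1)⁻¹) * ‖rp‖ ≤
      ‖u - uN‖ + ‖y - yN‖ + ‖p - pN‖ := by
  set A := ‖u - uN‖ with hA
  set B := ‖y - yN‖ with hB
  set C := ‖p - pN‖ with hC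
  have hA0 : 0 ≤ A := norm_nonneg _
  have hB0 : 0 ≤ B := norm_nonneg _
  have hC0 : 0 ≤ C := norm_nonneg _
  have hγ0 : γ ≠ 0 := ne_of_gt hγ
  set M1 := max (κ / β) 1 with hM1
  set M2 := max (1 / (ρ₁ ^ 2 * β)) 1 with hM2
  have hM1one : (1:ℝ) ≤ M1 := le_max_right _ _
  have hM2one : (1:ℝ) ≤ M2 := le_max_right _ _
  have hM1pos : 0 < M1 := lt_of_lt_of_le one_pos hM1one
  have hM2pos : 0 < M2 := lt_of_lt_of_le one_pos hM2one
  have hry_bound : ‖ry‖ ≤ κ * A + γ * B := by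
    apply ContinuousLinearMap.opNorm_le_bound _ (by positivity)
    intro v
    have h1 : ry v = b (uN - u) v + a (y - yN) v := by
      simp only [hry v, map_sub, LinearMap.sub_apply, hy v]; ring
    rw [h1]
    calc |b (uN - u) v + a (y - yN) v|
        ≤ |b (uN - u) v| + |a (y - yN) v| := abs_add_le _ _
      _ ≤ κ * ‖uN - u‖ * ‖v‖ + γ * ‖y - yN‖ * ‖v‖ := add_le_add (hb_cont _ _) (ha_cont _ _)
      _ = (κ * A + γ * B) * ‖v‖ := by rw [hA, norm_sub_rev uN u]; ring
  have hrp_bound : ‖rp‖ ≤ (1 / ρ₁ ^ 2) * B + γ * C := by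
    apply ContinuousLinearMap.opNorm_le_bound _ (by positivity)
    intro v
    have h2 := hp v
    have h1 : rp v = a v (p - pN) - ⟪E (y - yN), E v⟫ := by
      simp only [hrp v, map_sub, LinearMap.map_sub, inner_sub_left,
        ContinuousLinearMap.map_sub] at h2 ⊢
      linarith
    rw [h1]
    have hin : |⟪E (y - yN), E v⟫| ≤ (1 / ρ₁ ^ 2) * B * ‖v‖ := by
      have hnn : 0 ≤ (1 / ρ₁) * ‖y - yN‖ := by positivity
      calc |⟪E (y - yN), E v⟫| ≤ ‖E (y - yN)‖ * ‖E v‖ := abs_real_inner_le_norm _ _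
        _ ≤ ((1 / ρ₁) * ‖y - yN‖) * ((1 / ρ₁) * ‖v‖) :=
            mul_le_mul (hE _) (hE _) (norm_nonneg _) hnn
        _ = (1 / ρ₁ ^ 2) * B * ‖v‖ := by rw [hB]; ring
    calc |a v (p - pN) - ⟪E (y - yN), E v⟫|
        ≤ |a v (p - pN)| + |⟪E (y - yN), E v⟫| := abs_sub _ _
      _ ≤ γ * ‖v‖ * ‖p - pN‖ + (1 / ρ₁ ^ 2) * B * ‖v‖ := add_le_add (ha_cont _ _) hin
      _ = ((1 / ρ₁ ^ 2) * B + γ * C) * ‖v‖ := by rw [hC]; ring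
  by_cases hT : ∀ w : Y, w = 0
  · have hry0 : ‖ry‖ = 0 := by
      rw [show ry = 0 from by ext v; rw [hT v]; simp]; simp
    have hrp0 : ‖rp‖ = 0 := by
      rw [show rp = 0 from by ext v; rw [hT v]; simp]; simp
    rw [hry0, hrp0]
    have : (0:ℝ) ≤ A + B + C := by positivity
    simpa using this
  · push_neg at hT
    obtain ⟨w, hw⟩ := hT
    have hwn : 0 < ‖w‖ := norm_pos_iff.mpr hw
    have hβγ : β ≤ γ := by
      have h1 := ha_coer w
      have h2 : a w w ≤ γ * ‖w‖ * ‖w‖ := le_trans (le_abs_self _) (ha_cont w w)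
      have hsq : ‖w‖ ^ 2 = ‖w‖ * ‖w‖ := sq ‖w‖
      nlinarith [mul_pos hwn hwn]
    have hryn : 0 ≤ ‖ry‖ := norm_nonneg _
    have hrpn : 0 ≤ ‖rp‖ := norm_nonneg _
    have e1 : M1⁻¹ * κ ≤ γ := by
      rw [inv_mul_le_iff₀ hM1pos]
      have h1 : κ ≤ M1 * β := (div_le_iff₀ hβ).mp (le_max_left _ _)
      nlinarith
    have e2 : M1⁻¹ * γ ≤ γ := by
      have h := inv_le_one_of_one_le₀ hM1one
      calc M1⁻¹ * γ ≤ 1 * γ := mul_le_mul_of_nonneg_right h hγ.le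
        _ = γ := one_mul γ
    have e3 : M2⁻¹ * (1 / ρ₁ ^ 2) ≤ γ := by
      rw [inv_mul_le_iff₀ hM2pos]
      have h1 : (1:ℝ) ≤ M2 * (ρ₁ ^ 2 * β) := by
        have := (div_le_iff₀ (by positivity : (0:ℝ) < ρ₁ ^ 2 * β)).mp
          (le_max_left (1 / (ρ₁ ^ 2 * β)) 1)
        linarith
      rw [div_le_iff₀ (by positivity : (0:ℝ) < ρ₁ ^ 2)]
      nlinarith [mul_nonneg (mul_nonneg hM2pos.le (sq_nonneg ρ₁)) (sub_nonneg.mpr hβγ)]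
    have e4 : M2⁻¹ * γ ≤ γ := by
      have h := inv_le_one_of_one_le₀ hM2one
      calc M2⁻¹ * γ ≤ 1 * γ := mul_le_mul_of_nonneg_right h hγ.le
        _ = γ := one_mul γ
    have key1 : (1 / (2 * γ)) * M1⁻¹ * ‖ry‖ ≤ (1/2) * A + (1/2) * B := by
      calc (1 / (2 * γ)) * M1⁻¹ * ‖ry‖
          ≤ (1 / (2 * γ)) * M1⁻¹ * (κ * A + γ * B) :=
            mul_le_mul_of_nonneg_left hry_bound (by positivity)
        _ = (1 / (2 * γ)) * ((M1⁻¹ * κ) * A + (M1⁻¹ * γ) * B) := by ring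
        _ ≤ (1 / (2 * γ)) * (γ * A + γ * B) := by
            apply mul_le_mul_of_nonneg_left _ (by positivity)
            exact add_le_add (mul_le_mul_of_nonneg_right e1 hA0)
              (mul_le_mul_of_nonneg_right e2 hB0)
        _ = (1/2) * A + (1/2) * B := by field_simp
    have key2 : (1 / (2 * γ)) * M2⁻¹ * ‖rp‖ ≤ (1/2) * B + (1/2) * C := by
      calc (1 / (2 * γ)) * M2⁻¹ * ‖rp‖
          ≤ (1 / (2 * γ)) * M2⁻¹ * ((1 / ρ₁ ^ 2) * B + γ * C) :=
            mul_le_mul_of_nonneg_left hrp_bound (by positivity)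
        _ = (1 / (2 * γ)) * ((M2⁻¹ * (1 / ρ₁ ^ 2)) * B + (M2⁻¹ * γ) * C) := by ring
        _ ≤ (1 / (2 * γ)) * (γ * B + γ * C) := by
            apply mul_le_mul_of_nonneg_left _ (by positivity)
            exact add_le_add (mul_le_mul_of_nonneg_right e3 hB0)
              (mul_le_mul_of_nonneg_right e4 hC0)
        _ = (1/2) * B + (1/2) * C := by field_simp
    linarith
end

section
/- State residual lower bound in terms of errors: suppose (u,y,p) solves the full optimality system and (u_N, y_N, p_N) solves the reduced optimality system. Then (1/γ)‖r_y‖_{Y*} ≤ max(κ/β, 1) · (‖u − u_N‖_U + ‖y − y_N‖_Y). -/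
open RealInnerProductSpace

theorem stmt_11
    {Y U H : Type*}
    [NormedAddCommGroup Y] [InnerProductSpace ℝ Y] [CompleteSpace Y]
    [NormedAddCommGroup U] [InnerProductSpace ℝ U] [CompleteSpace U]
    [NormedAddCommGroup H] [InnerProductSpace ℝ H] [CompleteSpace H]
    (E : Y →L[ℝ] H) (ρ₁ : ℝ) (hρ₁ : 0 < ρ₁)
    (hE : ∀ y : Y, ‖E y‖ ≤ (1 / ρ₁) * ‖y‖)
    (a : Y →ₗ[ℝ] Y →ₗ[ℝ] ℝ) (γ β : ℝ) (hγ : 0 < γ) (hβ : 0 < β)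
    (ha_cont : ∀ y v : Y, |a y v| ≤ γ * ‖y‖ * ‖v‖)
    (ha_coer : ∀ y : Y, β * ‖y‖ ^ 2 ≤ a y y)
    (b : U →ₗ[ℝ] Y →ₗ[ℝ] ℝ) (κ : ℝ) (hκ : 0 < κ)
    (hb_cont : ∀ (w : U) (v : Y), |b w v| ≤ κ * ‖w‖ * ‖v‖)
    (f : Y →L[ℝ] ℝ) (z : H) (α : ℝ) (hα : 0 < α)
    (Uad : Set U) (hUne : Uad.Nonempty) (hUcl : IsClosed Uad) (hUcx : Convex ℝ Uad)
    (u : U) (y p : Y) (hu : u ∈ Uad)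
    (hy : ∀ v : Y, a y v = b u v + f v)
    (hp : ∀ v : Y, a v p = ⟪E y - z, E v⟫)
    (hvi : ∀ v ∈ Uad, 0 ≤ b (v - u) p + α * ⟪u, v - u⟫)
    (YN : Submodule ℝ Y) (hYN : IsClosed (YN : Set Y))
    (uN : U) (yN pN : Y) (huN : uN ∈ Uad) (hyNm : yN ∈ YN) (hpNm : pN ∈ YN)
    (hyN : ∀ v ∈ YN, a yN v = b uN v + f v)
    (hpN : ∀ v ∈ YN, a v pN = ⟪E yN - z, E v⟫)
    (hviN : ∀ v ∈ Uad, 0 ≤ b (v - uN) pN + α * ⟪uN, v - uN⟫)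
    (ry : Y →L[ℝ] ℝ) (hry : ∀ v : Y, ry v = b uN v + f v - a yN v)
    :
    (1 / γ) * ‖ry‖ ≤ max (κ / β) 1 * (‖u - uN‖ + ‖y - yN‖) := by
  set A := ‖u - uN‖ with hA
  set B := ‖y - yN‖ with hB
  have hA0 : 0 ≤ A := norm_nonneg _
  have hB0 : 0 ≤ B := norm_nonneg _
  have hbound : ‖ry‖ ≤ κ * A + γ * B := by
    apply ContinuousLinearMap.opNorm_le_bound
    · positivity
    · intro v
      have h1 : ry v = b (uN - u) v + a (y - yN) v := by
        have hf : (f v : ℝ) = a y v - b u v := by have := hy v; linarith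
        rw [hry v, hf]
        simp [map_sub, LinearMap.sub_apply]
        ring
      rw [h1]
      calc |b (uN - u) v + a (y - yN) v| ≤ |b (uN - u) v| + |a (y - yN) v| :=
            abs_add_le _ _
        _ ≤ κ * ‖uN - u‖ * ‖v‖ + γ * ‖y - yN‖ * ‖v‖ :=
            add_le_add (hb_cont _ _) (ha_cont _ _)
        _ = (κ * A + γ * B) * ‖v‖ := by rw [norm_sub_rev uN u]; ring
  by_cases hs : ∃ w : Y, w ≠ 0
  · obtain ⟨w, hw⟩ := hs
    have hw0 : 0 < ‖w‖ := norm_pos_iff.mpr hw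
    have hβγ : β ≤ γ := by
      have h1 := ha_coer w
      have h2 := (le_abs_self (a w w)).trans (ha_cont w w)
      nlinarith [mul_pos hw0 hw0, sq_nonneg ‖w‖]
    have hM1 : (1 : ℝ) ≤ max (κ / β) 1 := le_max_right _ _
    have hMκ : κ / γ ≤ max (κ / β) 1 :=
      le_trans (div_le_div_of_nonneg_left hκ.le hβ hβγ) (le_max_left _ _)
    calc (1 / γ) * ‖ry‖ ≤ (1 / γ) * (κ * A + γ * B) := by
          apply mul_le_mul_of_nonneg_left hbound; positivity
      _ = (κ / γ) * A + B := by field_simp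
      _ ≤ max (κ / β) 1 * A + max (κ / β) 1 * B :=
          add_le_add (mul_le_mul_of_nonneg_right hMκ hA0)
            (le_mul_of_one_le_left hB0 hM1)
      _ = max (κ / β) 1 * (A + B) := (mul_add _ _ _).symm
  · push_neg at hs
    have hry0 : ‖ry‖ = 0 := by
      rw [show ry = 0 by ext v; rw [hs v]; simp]
      simp
    rw [hry0, mul_zero]
    have : (0:ℝ) ≤ max (κ / β) 1 := le_trans zero_le_one (le_max_right _ _)
    positivity
end

section
/- Adjoint residual lower bound in terms of errors: suppose (u,y,p) solves the full optimality system and (u_N, y_N, p_N) solves the reduced optimality system. Then (1/γ)‖r_p‖_{Y*} ≤ max(1/(ρ₁²β), 1) · (‖y − y_N‖_Y + ‖p − p_N‖_Y). -/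
open RealInnerProductSpace

theorem stmt_12
    {Y U H : Type*}
    [NormedAddCommGroup Y] [InnerProductSpace ℝ Y] [CompleteSpace Y]
    [NormedAddCommGroup U] [InnerProductSpace ℝ U] [CompleteSpace U]
    [NormedAddCommGroup H] [InnerProductSpace ℝ H] [CompleteSpace H]
    (E : Y →L[ℝ] H) (ρ₁ : ℝ) (hρ₁ : 0 < ρ₁)
    (hE : ∀ y : Y, ‖E y‖ ≤ (1 / ρ₁) * ‖y‖)
    (a : Y →ₗ[ℝ] Y →ₗ[ℝ] ℝ) (γ β : ℝ) (hγ : 0 < γ) (hβ : 0 < β)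
    (ha_cont : ∀ y v : Y, |a y v| ≤ γ * ‖y‖ * ‖v‖)
    (ha_coer : ∀ y : Y, β * ‖y‖ ^ 2 ≤ a y y)
    (b : U →ₗ[ℝ] Y →ₗ[ℝ] ℝ) (κ : ℝ) (hκ : 0 < κ)
    (hb_cont : ∀ (w : U) (v : Y), |b w v| ≤ κ * ‖w‖ * ‖v‖)
    (f : Y →L[ℝ] ℝ) (z : H) (α : ℝ) (hα : 0 < α)
    (Uad : Set U) (hUne : Uad.Nonempty) (hUcl : IsClosed Uad) (hUcx : Convex ℝ Uad)
    (u : U) (y p : Y) (hu : u ∈ Uad)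
    (hy : ∀ v : Y, a y v = b u v + f v)
    (hp : ∀ v : Y, a v p = ⟪E y - z, E v⟫)
    (hvi : ∀ v ∈ Uad, 0 ≤ b (v - u) p + α * ⟪u, v - u⟫)
    (YN : Submodule ℝ Y) (hYN : IsClosed (YN : Set Y))
    (uN : U) (yN pN : Y) (huN : uN ∈ Uad) (hyNm : yN ∈ YN) (hpNm : pN ∈ YN)
    (hyN : ∀ v ∈ YN, a yN v = b uN v + f v)
    (hpN : ∀ v ∈ YN, a v pN = ⟪E yN - z, E v⟫)
    (hviN : ∀ v ∈ Uad, 0 ≤ b (v - uN) pN + α * ⟪uN, v - uN⟫)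
    (rp : Y →L[ℝ] ℝ) (hrp : ∀ v : Y, rp v = ⟪E yN - z, E v⟫ - a v pN)
    :
    (1 / γ) * ‖rp‖ ≤ max (1 / (ρ₁ ^ 2 * β)) 1 * (‖y - yN‖ + ‖p - pN‖) := by
  by_cases hYtriv : ∃ w : Y, w ≠ 0
  · obtain ⟨w, hw⟩ := hYtriv
    have hw2 : (0:ℝ) < ‖w‖ ^ 2 := pow_pos (norm_pos_iff.mpr hw) 2
    have hβγ : β ≤ γ := by
      have h1 := ha_coer w
      have h3 : a w w ≤ γ * ‖w‖ * ‖w‖ := le_trans (le_abs_self _) (ha_cont w w)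
      nlinarith
    set C := (1 / ρ₁ ^ 2) * ‖y - yN‖ + γ * ‖p - pN‖ with hC
    have hCnn : 0 ≤ C := by positivity
    have hbound : ‖rp‖ ≤ C := by
      apply ContinuousLinearMap.opNorm_le_bound _ hCnn
      intro v
      have h1 : rp v = a v (p - pN) + ⟪E (yN - y), E v⟫ := by
        rw [hrp, map_sub, map_sub, inner_sub_left, hp v, inner_sub_left, inner_sub_left]
        ring
      have h2 : |a v (p - pN)| ≤ γ * ‖p - pN‖ * ‖v‖ := by
        have := ha_cont v (p - pN)
        calc |a v (p - pN)| ≤ γ * ‖v‖ * ‖p - pN‖ := this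
          _ = γ * ‖p - pN‖ * ‖v‖ := by ring
      have h3 : |⟪E (yN - y), E v⟫| ≤ (1 / ρ₁ ^ 2) * ‖y - yN‖ * ‖v‖ := by
        have hc := abs_real_inner_le_norm (E (yN - y)) (E v)
        have he1 := hE (yN - y)
        have he2 := hE v
        have hn : ‖yN - y‖ = ‖y - yN‖ := norm_sub_rev _ _
        have hEn1 : (0:ℝ) ≤ ‖E (yN - y)‖ := norm_nonneg _
        have hEn2 : (0:ℝ) ≤ ‖E v‖ := norm_nonneg _
        have hρ : (0:ℝ) < 1 / ρ₁ := by positivity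
        calc |⟪E (yN - y), E v⟫| ≤ ‖E (yN - y)‖ * ‖E v‖ := hc
          _ ≤ (1 / ρ₁ * ‖yN - y‖) * (1 / ρ₁ * ‖v‖) := by
              apply mul_le_mul he1 he2 hEn2
              positivity
          _ = (1 / ρ₁ ^ 2) * ‖y - yN‖ * ‖v‖ := by rw [hn]; ring
      calc ‖rp v‖ = |a v (p - pN) + ⟪E (yN - y), E v⟫| := by rw [h1, Real.norm_eq_abs]
        _ ≤ |a v (p - pN)| + |⟪E (yN - y), E v⟫| := abs_add_le _ _
        _ ≤ γ * ‖p - pN‖ * ‖v‖ + (1 / ρ₁ ^ 2) * ‖y - yN‖ * ‖v‖ := add_le_add h2 h3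
        _ = C * ‖v‖ := by rw [hC]; ring
    have hstep : (1 / γ) * ‖rp‖ ≤ (1 / (γ * ρ₁ ^ 2)) * ‖y - yN‖ + ‖p - pN‖ := by
      have := mul_le_mul_of_nonneg_left hbound (le_of_lt (by positivity : (0:ℝ) < 1 / γ))
      calc (1 / γ) * ‖rp‖ ≤ (1 / γ) * C := this
        _ = (1 / (γ * ρ₁ ^ 2)) * ‖y - yN‖ + ‖p - pN‖ := by rw [hC]; field_simp
    have hm1 : 1 / (γ * ρ₁ ^ 2) ≤ max (1 / (ρ₁ ^ 2 * β)) 1 := by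
      refine le_trans ?_ (le_max_left _ _)
      apply one_div_le_one_div_of_le (by positivity)
      nlinarith [sq_nonneg ρ₁, mul_pos hρ₁ hρ₁]
    have hm2 : (1:ℝ) ≤ max (1 / (ρ₁ ^ 2 * β)) 1 := le_max_right _ _
    have hn1 : (0:ℝ) ≤ ‖y - yN‖ := norm_nonneg _
    have hn2 : (0:ℝ) ≤ ‖p - pN‖ := norm_nonneg _
    calc (1 / γ) * ‖rp‖ ≤ (1 / (γ * ρ₁ ^ 2)) * ‖y - yN‖ + ‖p - pN‖ := hstep
      _ ≤ max (1 / (ρ₁ ^ 2 * β)) 1 * ‖y - yN‖ + max (1 / (ρ₁ ^ 2 * β)) 1 * ‖p - pN‖ := by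
          have h1 := mul_le_mul_of_nonneg_right hm1 hn1
          have h2 := mul_le_mul_of_nonneg_right hm2 hn2
          linarith
      _ = max (1 / (ρ₁ ^ 2 * β)) 1 * (‖y - yN‖ + ‖p - pN‖) := by ring
  · push_neg at hYtriv
    have hrp0 : rp = 0 := by
      ext v
      rw [hYtriv v]
      simp
    rw [hrp0]
    simp only [norm_zero, mul_zero]
    have : (0:ℝ) ≤ max (1 / (ρ₁ ^ 2 * β)) 1 := le_trans zero_le_one (le_max_right _ _)
    exact mul_nonneg this (by positivity)
end

section
/- Absolute control error estimator: suppose (u,y,p) solves the full optimality system and (u_N, y_N, p_N) solves the reduced optimality system. Then ‖u − u_N‖_U ≤ Δ_u, where Δ_u := (1/(ρ₁ √α β))‖r_y‖_{Y*} + (κ/(α β))‖r_p‖_{Y*}. -/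
open RealInnerProductSpace

private lemma solve_lm {Y : Type*} [NormedAddCommGroup Y] [InnerProductSpace ℝ Y]
    [CompleteSpace Y] {A : Y →L[ℝ] Y →L[ℝ] ℝ} (hA : IsCoercive A) (g : Y →L[ℝ] ℝ) :
    ∃ w : Y, ∀ v, A w v = g v := by
  refine ⟨hA.continuousLinearEquivOfBilin.symm ((InnerProductSpace.toDual ℝ Y).symm g),
    fun v => ?_⟩
  have h1 := hA.continuousLinearEquivOfBilin_apply
    (hA.continuousLinearEquivOfBilin.symm ((InnerProductSpace.toDual ℝ Y).symm g)) v
  rw [ContinuousLinearEquiv.apply_symm_apply, InnerProductSpace.toDual_symm_apply] at h1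
  exact h1.symm

private lemma div_bound {β q R : ℝ} (hβ : 0 < β) (hq : 0 ≤ q) (hR : 0 ≤ R)
    (h : β * q ^ 2 ≤ R * q) : q ≤ R / β := by
  rcases hq.eq_or_lt with h0 | h0
  · rw [← h0]; positivity
  · rw [le_div_iff₀ hβ]; nlinarith

private lemma young_ineq {c d : ℝ} : c * d - d ^ 2 ≤ c ^ 2 / 4 := by
  nlinarith [sq_nonneg (c - 2 * d)]

private lemma quad_bound {s t c1 c2 : ℝ} (hs0 : 0 < s) (ht : 0 ≤ t) (hc1 : 0 ≤ c1)
    (hc2 : 0 ≤ c2) (hq : s ^ 2 * t ^ 2 ≤ c1 * t + c2 ^ 2 / 4) : t ≤ c2 / s + c1 / s ^ 2 := by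
  by_contra hcon
  push_neg at hcon
  have h1 : s * c2 + c1 < s ^ 2 * t := by
    have h2 : s ^ 2 * (c2 / s + c1 / s ^ 2) = s * c2 + c1 := by field_simp
    calc s * c2 + c1 = s ^ 2 * (c2 / s + c1 / s ^ 2) := h2.symm
    _ < s ^ 2 * t := mul_lt_mul_of_pos_left hcon (by positivity)
  have ht0 : 0 < t := by nlinarith [mul_pos hs0 hs0]
  have h3 : c2 < s * t := by nlinarith [mul_pos hs0 hs0]
  nlinarith [mul_lt_mul_of_pos_right h1 ht0, mul_le_mul_of_nonneg_right h3.le hc2,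
    sq_nonneg c2]

theorem stmt_13
    {Y U H : Type*}
    [NormedAddCommGroup Y] [InnerProductSpace ℝ Y] [CompleteSpace Y]
    [NormedAddCommGroup U] [InnerProductSpace ℝ U] [CompleteSpace U]
    [NormedAddCommGroup H] [InnerProductSpace ℝ H] [CompleteSpace H]
    (E : Y →L[ℝ] H) (ρ₁ : ℝ) (hρ₁ : 0 < ρ₁)
    (hE : ∀ y : Y, ‖E y‖ ≤ (1 / ρ₁) * ‖y‖)
    (a : Y →ₗ[ℝ] Y →ₗ[ℝ] ℝ) (γ β : ℝ) (hγ : 0 < γ) (hβ : 0 < β)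
    (ha_cont : ∀ y v : Y, |a y v| ≤ γ * ‖y‖ * ‖v‖)
    (ha_coer : ∀ y : Y, β * ‖y‖ ^ 2 ≤ a y y)
    (b : U →ₗ[ℝ] Y →ₗ[ℝ] ℝ) (κ : ℝ) (hκ : 0 < κ)
    (hb_cont : ∀ (w : U) (v : Y), |b w v| ≤ κ * ‖w‖ * ‖v‖)
    (f : Y →L[ℝ] ℝ) (z : H) (α : ℝ) (hα : 0 < α)
    (Uad : Set U) (hUne : Uad.Nonempty) (hUcl : IsClosed Uad) (hUcx : Convex ℝ Uad)
    (u : U) (y p : Y) (hu : u ∈ Uad)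
    (hy : ∀ v : Y, a y v = b u v + f v)
    (hp : ∀ v : Y, a v p = ⟪E y - z, E v⟫)
    (hvi : ∀ v ∈ Uad, 0 ≤ b (v - u) p + α * ⟪u, v - u⟫)
    (YN : Submodule ℝ Y) (hYN : IsClosed (YN : Set Y))
    (uN : U) (yN pN : Y) (huN : uN ∈ Uad) (hyNm : yN ∈ YN) (hpNm : pN ∈ YN)
    (hyN : ∀ v ∈ YN, a yN v = b uN v + f v)
    (hpN : ∀ v ∈ YN, a v pN = ⟪E yN - z, E v⟫)
    (hviN : ∀ v ∈ Uad, 0 ≤ b (v - uN) pN + α * ⟪uN, v - uN⟫)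
    (ry : Y →L[ℝ] ℝ) (hry : ∀ v : Y, ry v = b uN v + f v - a yN v)
    (rp : Y →L[ℝ] ℝ) (hrp : ∀ v : Y, rp v = ⟪E yN - z, E v⟫ - a v pN)
    :
    ‖u - uN‖ ≤ (1 / (ρ₁ * Real.sqrt α * β)) * ‖ry‖ + (κ / (α * β)) * ‖rp‖ := by
  -- continuous versions of the bilinear forms
  have ha_cont' : ∀ y v : Y, ‖a y v‖ ≤ γ * ‖y‖ * ‖v‖ := by
    intro y v; rw [Real.norm_eq_abs]; exact ha_cont y v
  have hb_cont' : ∀ (w : U) (v : Y), ‖b w v‖ ≤ κ * ‖w‖ * ‖v‖ := by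
    intro w v; rw [Real.norm_eq_abs]; exact hb_cont w v
  set A : Y →L[ℝ] Y →L[ℝ] ℝ := LinearMap.mkContinuous₂ a γ ha_cont' with hAdef
  set B : U →L[ℝ] Y →L[ℝ] ℝ := LinearMap.mkContinuous₂ b κ hb_cont' with hBdef
  have hA : ∀ w v : Y, A w v = a w v := fun _ _ => rfl
  have hAc : IsCoercive A := by
    refine ⟨β, hβ, fun w => ?_⟩
    have h := ha_coer w
    have h2 : β * ‖w‖ * ‖w‖ = β * ‖w‖ ^ 2 := by ring
    rw [hA, h2]; exact h
  have hAfc : IsCoercive A.flip := by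
    refine ⟨β, hβ, fun w => ?_⟩
    rw [ContinuousLinearMap.flip_apply, hA]
    have h2 : β * ‖w‖ * ‖w‖ = β * ‖w‖ ^ 2 := by ring
    rw [h2]; exact ha_coer w
  -- auxiliary exact solutions
  obtain ⟨yh, hyh0⟩ := solve_lm hAc (B uN + f)
  have hyh : ∀ v : Y, a yh v = b uN v + f v := by
    intro v
    have := hyh0 v
    rwa [ContinuousLinearMap.add_apply, hA] at this
  obtain ⟨ph, hph0⟩ := solve_lm hAfc ((innerSL ℝ (E yh - z)).comp E)
  have hph : ∀ v : Y, a v ph = ⟪E yh - z, E v⟫ := by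
    intro v
    have := hph0 v
    rwa [ContinuousLinearMap.flip_apply, hA, ContinuousLinearMap.comp_apply,
      innerSL_apply_apply] at this
  obtain ⟨pt, hpt0⟩ := solve_lm hAfc ((innerSL ℝ (E yN - z)).comp E)
  have hpt : ∀ v : Y, a v pt = ⟪E yN - z, E v⟫ := by
    intro v
    have := hpt0 v
    rwa [ContinuousLinearMap.flip_apply, hA, ContinuousLinearMap.comp_apply,
      innerSL_apply_apply] at this
  set t := ‖u - uN‖ with htdef
  set d := ‖E y - E yh‖ with hddef
  set c1 := κ * ‖rp‖ / β with hc1def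
  set c2 := ‖ry‖ / (ρ₁ * β) with hc2def
  have ht : 0 ≤ t := norm_nonneg _
  have hc1 : 0 ≤ c1 := by positivity
  have hc2 : 0 ≤ c2 := by positivity
  have hd : 0 ≤ d := norm_nonneg _
  -- (1) from the two variational inequalities
  have hkey1 : α * t ^ 2 ≤ b (u - uN) pN - b (u - uN) p := by
    have h1 := hvi uN huN
    have h2 := hviN u hu
    simp only [map_sub, LinearMap.sub_apply, inner_sub_right] at h1 h2
    have hn : t ^ 2 = ⟪u, u⟫ - 2 * ⟪u, uN⟫ + ⟪uN, uN⟫ := by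
      rw [htdef, ← real_inner_self_eq_norm_sq, inner_sub_left, inner_sub_right,
        inner_sub_right, real_inner_comm uN u]
      ring
    rw [real_inner_comm u uN] at h2
    have hn' : α * t ^ 2 = α * ⟪u, u⟫ - 2 * (α * ⟪u, uN⟫) + α * ⟪uN, uN⟫ := by
      rw [hn]; ring
    simp only [map_sub, LinearMap.sub_apply]
    linarith
  -- (2) state error equation
  have hstate : ∀ v : Y, a (y - yh) v = b (u - uN) v := by
    intro v
    simp only [map_sub, LinearMap.sub_apply, hy v, hyh v]
    ring
  -- (3) b (u-uN) (ph - p) = -d^2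
  have h3 : b (u - uN) ph - b (u - uN) p = -(d ^ 2) := by
    rw [← hstate ph, ← hstate p, hph (y - yh), hp (y - yh)]
    rw [← inner_sub_left]
    have heq : (E yh - z) - (E y - z) = -(E y - E yh) := by abel
    rw [heq, inner_neg_left, map_sub, real_inner_self_eq_norm_sq, hddef]
  -- (4) middle term
  have h4 : b (u - uN) pt - b (u - uN) ph ≤ c2 * d := by
    have heq : b (u - uN) pt - b (u - uN) ph = ⟪E yN - E yh, E y - E yh⟫ := by
      rw [← hstate pt, ← hstate ph, hpt (y - yh), hph (y - yh), ← inner_sub_left]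
      have heq2 : (E yN - z) - (E yh - z) = E yN - E yh := by abel
      rw [heq2, map_sub]
    have hle : ⟪E yN - E yh, E y - E yh⟫ ≤ ‖E yN - E yh‖ * d :=
      real_inner_le_norm _ _
    have hEc : ‖E yN - E yh‖ ≤ c2 := by
      have e1 : E yN - E yh = E (yN - yh) := (map_sub E yN yh).symm
      have e2 : ‖E (yN - yh)‖ ≤ (1 / ρ₁) * ‖yN - yh‖ := hE _
      have est_yh : ‖yh - yN‖ ≤ ‖ry‖ / β := by
        refine div_bound hβ (norm_nonneg _) (norm_nonneg _) ?_
        have hcoer := ha_coer (yh - yN)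
        have heqa : a (yh - yN) (yh - yN) = ry (yh - yN) := by
          simp only [hry, map_sub, LinearMap.sub_apply, hyh]
          ring
        have hb2 : ry (yh - yN) ≤ ‖ry‖ * ‖yh - yN‖ := by
          calc ry (yh - yN) ≤ |ry (yh - yN)| := le_abs_self _
          _ = ‖ry (yh - yN)‖ := (Real.norm_eq_abs _).symm
          _ ≤ ‖ry‖ * ‖yh - yN‖ := ry.le_opNorm _
        linarith [heqa ▸ hcoer]
      rw [e1]
      calc ‖E (yN - yh)‖ ≤ (1 / ρ₁) * ‖yN - yh‖ := e2
      _ = (1 / ρ₁) * ‖yh - yN‖ := by rw [norm_sub_rev]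
      _ ≤ (1 / ρ₁) * (‖ry‖ / β) := by
          apply mul_le_mul_of_nonneg_left est_yh (by positivity)
      _ = c2 := by rw [hc2def]; field_simp
    calc b (u - uN) pt - b (u - uN) ph = ⟪E yN - E yh, E y - E yh⟫ := heq
    _ ≤ ‖E yN - E yh‖ * d := hle
    _ ≤ c2 * d := mul_le_mul_of_nonneg_right hEc hd
  -- (5) residual term
  have h5 : b (u - uN) pN - b (u - uN) pt ≤ c1 * t := by
    have est_pt : ‖pN - pt‖ ≤ ‖rp‖ / β := by
      refine div_bound hβ (norm_nonneg _) (norm_nonneg _) ?_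
      have hcoer := ha_coer (pN - pt)
      have heqa : a (pN - pt) (pN - pt) = -(rp (pN - pt)) := by
        have h1' := hrp (pN - pt)
        have h2' := hpt (pN - pt)
        have h3' : (a (pN - pt)) (pN - pt) = (a (pN - pt)) pN - (a (pN - pt)) pt :=
          map_sub _ _ _
        rw [h3', h2']
        linarith
      have hb2 : -(rp (pN - pt)) ≤ ‖rp‖ * ‖pN - pt‖ := by
        calc -(rp (pN - pt)) ≤ |rp (pN - pt)| := neg_le_abs _
        _ = ‖rp (pN - pt)‖ := (Real.norm_eq_abs _).symm
        _ ≤ ‖rp‖ * ‖pN - pt‖ := rp.le_opNorm _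
      linarith [heqa ▸ hcoer]
    have hbb : b (u - uN) pN - b (u - uN) pt = b (u - uN) (pN - pt) :=
      (map_sub (b (u - uN)) pN pt).symm
    rw [hbb]
    calc b (u - uN) (pN - pt) ≤ |b (u - uN) (pN - pt)| := le_abs_self _
    _ ≤ κ * ‖u - uN‖ * ‖pN - pt‖ := hb_cont _ _
    _ ≤ κ * t * (‖rp‖ / β) := by
        apply mul_le_mul_of_nonneg_left est_pt (by positivity)
    _ = c1 * t := by rw [hc1def]; ring
  -- combine
  have hquad : α * t ^ 2 ≤ c1 * t + c2 ^ 2 / 4 := by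
    have hy2 : c2 * d - d ^ 2 ≤ c2 ^ 2 / 4 := young_ineq
    linarith
  set s := Real.sqrt α with hsdef
  have hs0 : 0 < s := Real.sqrt_pos.2 hα
  have hs : s ^ 2 = α := Real.sq_sqrt hα.le
  have main : t ≤ c2 / s + c1 / s ^ 2 :=
    quad_bound hs0 ht hc1 hc2 (by rw [hs]; linarith)
  calc t ≤ c2 / s + c1 / s ^ 2 := main
  _ = (1 / (ρ₁ * s * β)) * ‖ry‖ + (κ / (α * β)) * ‖rp‖ := by
      rw [hc1def, hc2def, hs]
      field_simp
end

section
/- Relative control error estimator: suppose (u,y,p) solves the full optimality system and (u_N, y_N, p_N) solves the reduced optimality system, with u_N ≠ 0. Let Δ_u := (1/(ρ₁ √α β))‖r_y‖_{Y*} + (κ/(α β))‖r_p‖_{Y*}. If 2Δ_u/‖u_N‖_U ≤ 1, then ‖u − u_N‖_U / ‖u‖_U ≤ 2Δ_u / ‖u_N‖_U. -/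
/-!
Let `w` be the Riesz–Lax–Milgram representative of the state residual, `a w · = r_y`, so that
`e := y - y_N - w` solves the state equation with right-hand side `b (u - u_N) ·`. Adding the two
variational inequalities and using the adjoint equations turns `α ‖u - u_N‖²` into
`-‖E e‖² - (E w, E e) - r_p(e)`. With `‖E w‖ ≤ ‖r_y‖ / (ρ₁ β)` and `‖e‖ ≤ κ ‖u - u_N‖ / β` this is a
quadratic inequality in `‖u - u_N‖` and `‖E e‖` whose solution gives `‖u - u_N‖ ≤ Δ_u`. Finally
`2 Δ_u ≤ ‖u_N‖` forces `‖u‖ ≥ ‖u_N‖ / 2`, which turns the absolute bound into the relative one.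
-/

open RealInnerProductSpace

lemma le_div_of_mul_sq_le_mul {β x R : ℝ} (hβ : 0 < β) (hx : 0 ≤ x) (hR : 0 ≤ R)
    (h : β * x ^ 2 ≤ R * x) : x ≤ R / β := by
  rw [le_div_iff₀ hβ]
  rcases hx.eq_or_lt with rfl | hx
  · simpa using hR
  · nlinarith

lemma le_div_add_div_sq_of_sq_mul_sq_add_sq_le {s c d X t : ℝ} (hs : 0 < s) (hc : 0 ≤ c)
    (hd : 0 ≤ d) (hX : 0 ≤ X) (h : s ^ 2 * X ^ 2 + t ^ 2 ≤ c * t + d * X) :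
    X ≤ c / (2 * s) + d / s ^ 2 := by
  have hX_quad : s ^ 2 * X ^ 2 - d * X ≤ c ^ 2 / 4 := by nlinarith [sq_nonneg (t - c / 2)]
  by_contra! hlt
  set X₀ := c / (2 * s) + d / s ^ 2
  have hX₀ : s ^ 2 * X₀ - d = s * c / 2 := by simp only [X₀]; field_simp; ring
  have hX₀_ge : c / (2 * s) ≤ X₀ := le_add_of_nonneg_right (by positivity)
  -- `X ↦ X (s² X - d)` is increasing past `d / s²` and already reaches `c² / 4` at `X₀`.
  have hgrow : X₀ * (s * c / 2) < X * (s ^ 2 * X - d) := by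
    have : s * c / 2 < s ^ 2 * X - d := by nlinarith [sq_pos_of_pos hs]
    nlinarith [mul_nonneg hs.le hc]
  have hbase : c ^ 2 / 4 ≤ X₀ * (s * c / 2) := by
    calc c ^ 2 / 4 = c / (2 * s) * (s * c / 2) := by field_simp; ring
      _ ≤ X₀ * (s * c / 2) := by gcongr
  linarith

lemma norm_sub_div_norm_le_of_norm_sub_le {G : Type*} [NormedAddCommGroup G] {u v : G} {D : ℝ}
    (hD : ‖u - v‖ ≤ D) (hv : v ≠ 0) (hsmall : 2 * D / ‖v‖ ≤ 1) :
    ‖u - v‖ / ‖u‖ ≤ 2 * D / ‖v‖ := by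
  have hv_pos : 0 < ‖v‖ := norm_pos_iff.mpr hv
  have h2D : 2 * D ≤ ‖v‖ := (div_le_one hv_pos).mp hsmall
  have hvu : ‖v‖ - ‖u‖ ≤ ‖u - v‖ := by
    rw [norm_sub_rev]; exact norm_sub_norm_le v u
  have hu : ‖v‖ ≤ 2 * ‖u‖ := by linarith
  have hu_pos : 0 < ‖u‖ := by linarith
  rw [div_le_div_iff₀ hu_pos hv_pos]
  nlinarith [norm_nonneg (u - v)]

section Bilinear

variable {Y U : Type*} [NormedAddCommGroup Y] [InnerProductSpace ℝ Y]
  [NormedAddCommGroup U] [InnerProductSpace ℝ U]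

lemma exists_bilin_apply_eq_of_coercive [CompleteSpace Y] (a : Y →ₗ[ℝ] Y →ₗ[ℝ] ℝ) {γ β : ℝ}
    (hβ : 0 < β) (ha_cont : ∀ y v : Y, |a y v| ≤ γ * ‖y‖ * ‖v‖)
    (ha_coer : ∀ y : Y, β * ‖y‖ ^ 2 ≤ a y y) (ℓ : Y →L[ℝ] ℝ) :
    ∃ w : Y, ∀ v : Y, a w v = ℓ v := by
  let A : Y →L[ℝ] Y →L[ℝ] ℝ := a.mkContinuous₂ γ fun y v => ha_cont y v
  have hA : IsCoercive A := ⟨β, hβ, fun v => by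
    simpa [A, pow_two, mul_assoc] using ha_coer v⟩
  refine ⟨hA.continuousLinearEquivOfBilin.symm ((InnerProductSpace.toDual ℝ Y).symm ℓ),
    fun v => ?_⟩
  change A _ v = ℓ v
  rw [← hA.continuousLinearEquivOfBilin_apply, ContinuousLinearEquiv.apply_symm_apply]
  exact InnerProductSpace.toDual_symm_apply

lemma norm_le_div_of_coercive (a : Y →ₗ[ℝ] Y →ₗ[ℝ] ℝ) {β M : ℝ} (hβ : 0 < β) (hM : 0 ≤ M)
    (ha_coer : ∀ y : Y, β * ‖y‖ ^ 2 ≤ a y y) {w : Y} (hw : ∀ v : Y, |a w v| ≤ M * ‖v‖) :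
    ‖w‖ ≤ M / β :=
  le_div_of_mul_sq_le_mul hβ (norm_nonneg w) hM <|
    (ha_coer w).trans <| (le_abs_self _).trans (hw w)

lemma abs_apply_le_opNorm_mul_norm (ℓ : Y →L[ℝ] ℝ) (v : Y) : |ℓ v| ≤ ‖ℓ‖ * ‖v‖ := by
  simpa only [Real.norm_eq_abs] using ℓ.le_opNorm v

lemma mul_norm_sub_sq_le_of_variational (b : U →ₗ[ℝ] Y →ₗ[ℝ] ℝ) {α : ℝ} {u uN : U} {p pN : Y}
    (hvi : 0 ≤ b (uN - u) p + α * ⟪u, uN - u⟫)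
    (hviN : 0 ≤ b (u - uN) pN + α * ⟪uN, u - uN⟫) :
    α * ‖u - uN‖ ^ 2 ≤ b (u - uN) (pN - p) := by
  have hinner : α * ⟪u, uN - u⟫ + α * ⟪uN, u - uN⟫ = -(α * ‖u - uN‖ ^ 2) := by
    rw [← mul_add, norm_sub_sq_real, inner_sub_right, inner_sub_right, real_inner_self_eq_norm_sq,
      real_inner_self_eq_norm_sq, real_inner_comm uN u]
    ring
  have hb : b (uN - u) p = -b (u - uN) p := by rw [← neg_sub, map_neg, LinearMap.neg_apply]
  rw [map_sub]
  linarith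

end Bilinear

section ControlError

variable {Y U H : Type*} [NormedAddCommGroup Y] [InnerProductSpace ℝ Y]
  [NormedAddCommGroup U] [InnerProductSpace ℝ U] [NormedAddCommGroup H] [InnerProductSpace ℝ H]
  {E : Y →L[ℝ] H} {a : Y →ₗ[ℝ] Y →ₗ[ℝ] ℝ} {b : U →ₗ[ℝ] Y →ₗ[ℝ] ℝ} {f : Y → ℝ} {z : H}
  {u uN : U} {y p yN pN w : Y} {ry rp : Y →L[ℝ] ℝ}

/-- The a posteriori estimator `Δ_u` of the control error. -/
noncomputable def controlErrorEstimator (ρ₁ α β κ : ℝ) (ry rp : Y →L[ℝ] ℝ) : ℝ :=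
  (1 / (ρ₁ * Real.sqrt α * β)) * ‖ry‖ + (κ / (α * β)) * ‖rp‖

lemma apply_sub_sub_eq_of_residual (hy : ∀ v : Y, a y v = b u v + f v)
    (hry : ∀ v : Y, ry v = b uN v + f v - a yN v) (hw : ∀ v : Y, a w v = ry v) (v : Y) :
    a (y - yN - w) v = b (u - uN) v := by
  simp only [map_sub, LinearMap.sub_apply, hy, hw, hry]
  ring

lemma bilin_sub_eq_of_adjoint (he : ∀ v : Y, a (y - yN - w) v = b (u - uN) v)
    (hp : ∀ v : Y, a v p = ⟪E y - z, E v⟫)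
    (hrp : ∀ v : Y, rp v = ⟪E yN - z, E v⟫ - a v pN) :
    b (u - uN) (pN - p) =
      -‖E (y - yN - w)‖ ^ 2 - ⟪E w, E (y - yN - w)⟫ - rp (y - yN - w) := by
  set e := y - yN - w
  have hEy : E y - z = (E yN - z) + E e + E w := by simp only [e, map_sub]; abel
  rw [← he, map_sub, hp, hrp, hEy, inner_add_left, inner_add_left, real_inner_self_eq_norm_sq]
  ring

theorem norm_sub_le_controlErrorEstimator [CompleteSpace Y] {ρ₁ γ β κ α : ℝ}
    (hρ₁ : 0 < ρ₁) (hE : ∀ y : Y, ‖E y‖ ≤ (1 / ρ₁) * ‖y‖) (hβ : 0 < β)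
    (ha_cont : ∀ y v : Y, |a y v| ≤ γ * ‖y‖ * ‖v‖) (ha_coer : ∀ y : Y, β * ‖y‖ ^ 2 ≤ a y y)
    (hκ : 0 < κ) (hb_cont : ∀ (w : U) (v : Y), |b w v| ≤ κ * ‖w‖ * ‖v‖) (hα : 0 < α)
    (hy : ∀ v : Y, a y v = b u v + f v) (hp : ∀ v : Y, a v p = ⟪E y - z, E v⟫)
    (hvi : 0 ≤ b (uN - u) p + α * ⟪u, uN - u⟫) (hviN : 0 ≤ b (u - uN) pN + α * ⟪uN, u - uN⟫)
    (hry : ∀ v : Y, ry v = b uN v + f v - a yN v)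
    (hrp : ∀ v : Y, rp v = ⟪E yN - z, E v⟫ - a v pN) :
    ‖u - uN‖ ≤ controlErrorEstimator ρ₁ α β κ ry rp := by
  obtain ⟨w, hw⟩ := exists_bilin_apply_eq_of_coercive a hβ ha_cont ha_coer ry
  set e := y - yN - w
  set X := ‖u - uN‖
  set s := Real.sqrt α
  have hs : 0 < s := Real.sqrt_pos.mpr hα
  have hs2 : s ^ 2 = α := Real.sq_sqrt hα.le
  have he : ∀ v, a e v = b (u - uN) v := apply_sub_sub_eq_of_residual hy hry hw
  have hw_norm : ‖w‖ ≤ ‖ry‖ / β := norm_le_div_of_coercive a hβ (norm_nonneg _) ha_coer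
    fun v => hw v ▸ abs_apply_le_opNorm_mul_norm ry v
  have he_norm : ‖e‖ ≤ κ * X / β := norm_le_div_of_coercive a hβ (by positivity) ha_coer
    fun v => he v ▸ hb_cont _ v
  have hEw : ‖E w‖ ≤ ‖ry‖ / (ρ₁ * β) :=
    calc ‖E w‖ ≤ (1 / ρ₁) * (‖ry‖ / β) := (hE w).trans (by gcongr)
      _ = ‖ry‖ / (ρ₁ * β) := by field_simp
  have hquad : s ^ 2 * X ^ 2 + ‖E e‖ ^ 2 ≤ ‖ry‖ / (ρ₁ * β) * ‖E e‖ + κ * ‖rp‖ / β * X := by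
    have hsum := mul_norm_sub_sq_le_of_variational b hvi hviN
    rw [bilin_sub_eq_of_adjoint he hp hrp] at hsum
    have hwe : -⟪E w, E e⟫ ≤ ‖ry‖ / (ρ₁ * β) * ‖E e‖ :=
      (neg_le_abs _).trans <| (abs_real_inner_le_norm _ _).trans (by gcongr)
    have hrpe : -rp e ≤ κ * ‖rp‖ / β * X :=
      calc -rp e ≤ ‖rp‖ * ‖e‖ := (neg_le_abs _).trans (abs_apply_le_opNorm_mul_norm rp e)
        _ ≤ ‖rp‖ * (κ * X / β) := by gcongr
        _ = κ * ‖rp‖ / β * X := by ring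
    rw [hs2]
    linarith
  calc X ≤ ‖ry‖ / (ρ₁ * β) / (2 * s) + κ * ‖rp‖ / β / s ^ 2 :=
        le_div_add_div_sq_of_sq_mul_sq_add_sq_le hs (by positivity) (by positivity)
          (norm_nonneg _) hquad
    _ ≤ ‖ry‖ / (ρ₁ * β) / s + κ * ‖rp‖ / β / s ^ 2 := by gcongr; linarith
    _ = controlErrorEstimator ρ₁ α β κ ry rp := by
        change _ = 1 / (ρ₁ * s * β) * ‖ry‖ + κ / (α * β) * ‖rp‖
        rw [← hs2]
        field_simp

end ControlError

theorem stmt_14_general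
    {Y U H : Type*}
    [NormedAddCommGroup Y] [InnerProductSpace ℝ Y] [CompleteSpace Y]
    [NormedAddCommGroup U] [InnerProductSpace ℝ U]
    [NormedAddCommGroup H] [InnerProductSpace ℝ H]
    (E : Y →L[ℝ] H) (ρ₁ : ℝ) (hρ₁ : 0 < ρ₁)
    (hE : ∀ y : Y, ‖E y‖ ≤ (1 / ρ₁) * ‖y‖)
    (a : Y →ₗ[ℝ] Y →ₗ[ℝ] ℝ) (γ β : ℝ) (hβ : 0 < β)
    (ha_cont : ∀ y v : Y, |a y v| ≤ γ * ‖y‖ * ‖v‖)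
    (ha_coer : ∀ y : Y, β * ‖y‖ ^ 2 ≤ a y y)
    (b : U →ₗ[ℝ] Y →ₗ[ℝ] ℝ) (κ : ℝ) (hκ : 0 < κ)
    (hb_cont : ∀ (w : U) (v : Y), |b w v| ≤ κ * ‖w‖ * ‖v‖)
    (f : Y →L[ℝ] ℝ) (z : H) (α : ℝ) (hα : 0 < α)
    (Uad : Set U)
    (u : U) (y p : Y) (hu : u ∈ Uad)
    (hy : ∀ v : Y, a y v = b u v + f v)
    (hp : ∀ v : Y, a v p = ⟪E y - z, E v⟫)
    (hvi : ∀ v ∈ Uad, 0 ≤ b (v - u) p + α * ⟪u, v - u⟫)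
    (uN : U) (yN pN : Y) (huN : uN ∈ Uad)
    (hviN : ∀ v ∈ Uad, 0 ≤ b (v - uN) pN + α * ⟪uN, v - uN⟫)
    (ry : Y →L[ℝ] ℝ) (hry : ∀ v : Y, ry v = b uN v + f v - a yN v)
    (rp : Y →L[ℝ] ℝ) (hrp : ∀ v : Y, rp v = ⟪E yN - z, E v⟫ - a v pN)
    (huN0 : uN ≠ 0)
    (hcond : 2 * ((1 / (ρ₁ * Real.sqrt α * β)) * ‖ry‖ + (κ / (α * β)) * ‖rp‖) / ‖uN‖ ≤ 1) :
    ‖u - uN‖ / ‖u‖ ≤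
      2 * ((1 / (ρ₁ * Real.sqrt α * β)) * ‖ry‖ + (κ / (α * β)) * ‖rp‖) / ‖uN‖ :=
  norm_sub_div_norm_le_of_norm_sub_le
    (norm_sub_le_controlErrorEstimator hρ₁ hE hβ ha_cont ha_coer hκ hb_cont hα hy hp
      (hvi uN huN) (hviN u hu) hry hrp)
    huN0 hcond

theorem stmt_14
    {Y U H : Type*}
    [NormedAddCommGroup Y] [InnerProductSpace ℝ Y] [CompleteSpace Y]
    [NormedAddCommGroup U] [InnerProductSpace ℝ U] [CompleteSpace U]
    [NormedAddCommGroup H] [InnerProductSpace ℝ H] [CompleteSpace H]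
    (E : Y →L[ℝ] H) (ρ₁ : ℝ) (hρ₁ : 0 < ρ₁)
    (hE : ∀ y : Y, ‖E y‖ ≤ (1 / ρ₁) * ‖y‖)
    (a : Y →ₗ[ℝ] Y →ₗ[ℝ] ℝ) (γ β : ℝ) (hγ : 0 < γ) (hβ : 0 < β)
    (ha_cont : ∀ y v : Y, |a y v| ≤ γ * ‖y‖ * ‖v‖)
    (ha_coer : ∀ y : Y, β * ‖y‖ ^ 2 ≤ a y y)
    (b : U →ₗ[ℝ] Y →ₗ[ℝ] ℝ) (κ : ℝ) (hκ : 0 < κ)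
    (hb_cont : ∀ (w : U) (v : Y), |b w v| ≤ κ * ‖w‖ * ‖v‖)
    (f : Y →L[ℝ] ℝ) (z : H) (α : ℝ) (hα : 0 < α)
    (Uad : Set U) (hUne : Uad.Nonempty) (hUcl : IsClosed Uad) (hUcx : Convex ℝ Uad)
    (u : U) (y p : Y) (hu : u ∈ Uad)
    (hy : ∀ v : Y, a y v = b u v + f v)
    (hp : ∀ v : Y, a v p = ⟪E y - z, E v⟫)
    (hvi : ∀ v ∈ Uad, 0 ≤ b (v - u) p + α * ⟪u, v - u⟫)
    (YN : Submodule ℝ Y) (hYN : IsClosed (YN : Set Y))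
    (uN : U) (yN pN : Y) (huN : uN ∈ Uad) (hyNm : yN ∈ YN) (hpNm : pN ∈ YN)
    (hyN : ∀ v ∈ YN, a yN v = b uN v + f v)
    (hpN : ∀ v ∈ YN, a v pN = ⟪E yN - z, E v⟫)
    (hviN : ∀ v ∈ Uad, 0 ≤ b (v - uN) pN + α * ⟪uN, v - uN⟫)
    (ry : Y →L[ℝ] ℝ) (hry : ∀ v : Y, ry v = b uN v + f v - a yN v)
    (rp : Y →L[ℝ] ℝ) (hrp : ∀ v : Y, rp v = ⟪E yN - z, E v⟫ - a v pN)
    (huN0 : uN ≠ 0)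
    (hcond : 2 * ((1 / (ρ₁ * Real.sqrt α * β)) * ‖ry‖ + (κ / (α * β)) * ‖rp‖) / ‖uN‖ ≤ 1) :
    ‖u - uN‖ / ‖u‖ ≤
      2 * ((1 / (ρ₁ * Real.sqrt α * β)) * ‖ry‖ + (κ / (α * β)) * ‖rp‖) / ‖uN‖ :=
  stmt_14_general E ρ₁ hρ₁ hE a γ β hβ ha_cont ha_coer b κ hκ hb_cont f z α hα Uad u y p hu hy hp
    hvi uN yN pN huN hviN ry hry rp hrp huN0 hcond
end
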